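/- arXiv:math/0404300 — 6 statements merged into one kernel-verified Lean document; each statement's English description precedes it below -/
import Mathlib

section
/- For every signed permutation β ∈ B_n, N_1(β) + N_2(β) = -∑_{i ∈ Neg(β)} β(i), where Neg(β) = {i ∈ [n] : β(i) < 0}, N_1(β) = |Neg(β)|, and N_2(β) = |{{i,j} ⊆ [n], i ≠ j : β(i) + β(j) < 0}|. -/
open Finset Polynomial

/-- The hyperoctahedral group `B n`, modeled as pairs (permutation, sign vector):
the signed permutation with window `β(i) = ±(σ(i)+1)`. -/
abbrev Bgrp (n : ℕ) := Equiv.Perm (Fin n) × (Fin n → Bool)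

/-- The window entry `β(i)` (a nonzero integer). -/
def wdw {n : ℕ} (β : Bgrp n) (i : Fin n) : ℤ :=
  (if β.2 i then -1 else 1) * ((β.1 i : ℤ) + 1)

/-- Window entry at a `ℕ` position (0-based), `0` out of range. -/
def wdwN {n : ℕ} (β : Bgrp n) (i : ℕ) : ℤ :=
  if h : i < n then wdw β ⟨i, h⟩ else 0

/-- Number of inversions of the window. -/
def invB {n : ℕ} (β : Bgrp n) : ℕ :=
  ((univ : Finset (Fin n × Fin n)).filter
    (fun p => p.1 < p.2 ∧ wdw β p.2 < wdw β p.1)).card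

/-- The set of positions with negative entries. -/
def NegB {n : ℕ} (β : Bgrp n) : Finset (Fin n) :=
  univ.filter (fun i => wdw β i < 0)

def N1 {n : ℕ} (β : Bgrp n) : ℕ := (NegB β).card

def N2 {n : ℕ} (β : Bgrp n) : ℕ :=
  ((univ : Finset (Fin n × Fin n)).filter
    (fun p => p.1 < p.2 ∧ wdw β p.1 + wdw β p.2 < 0)).card

/-- The order `-1 ≺ -2 ≺ ⋯ ≺ -n ≺ 1 ≺ 2 ≺ ⋯ ≺ n` on nonzero integers. -/
def precLt (a b : ℤ) : Prop :=
  (a < 0 ∧ b < 0 ∧ b < a) ∨ (a < 0 ∧ 0 < b) ∨ (0 < a ∧ 0 < b ∧ a < b)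

instance (a b : ℤ) : Decidable (precLt a b) := by unfold precLt; infer_instance

/-- Descent set of the window, with respect to `≺` (0-based positions). -/
def DesB {n : ℕ} (β : Bgrp n) : Finset ℕ :=
  (range (n-1)).filter (fun i => precLt (wdwN β (i+1)) (wdwN β i))

/-- Major index: sum of the (1-based) descent positions. -/
def majB {n : ℕ} (β : Bgrp n) : ℕ := ∑ i ∈ DesB β, (i+1)

/-- Flag-major index. -/
def fmaj {n : ℕ} (β : Bgrp n) : ℕ := 2 * majB β + N1 β

/-- Group multiplication (composition of signed permutations). -/
def bmul {n : ℕ} (β γ : Bgrp n) : Bgrp n :=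
  (β.1 * γ.1, fun i => xor (γ.2 i) (β.2 (γ.1 i)))

/-- The identity signed permutation. -/
def bone (n : ℕ) : Bgrp n := (1, fun _ => false)

/-- The Coxeter generators `s_0, s_1, …, s_{n-1}` of `B n`. -/
def BGens (n : ℕ) : Set (Bgrp n) :=
  { b | (∃ h : 0 < n, b = ((1 : Equiv.Perm (Fin n)), fun j => decide (j = (⟨0, h⟩ : Fin n)))) ∨
        (∃ (i : ℕ) (h : i + 1 < n),
          b = (Equiv.swap ⟨i, Nat.lt_of_succ_lt h⟩ ⟨i+1, h⟩, fun _ => false)) }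

/-- Minimal length of an expression of `β` as a product of the generators of `B n`. -/
noncomputable def lenB {n : ℕ} (β : Bgrp n) : ℕ :=
  sInf {k | ∃ l : List (Bgrp n), l.length = k ∧ (∀ g ∈ l, g ∈ BGens n) ∧
    l.foldr bmul (bone n) = β}

/-- The Coxeter generators `s_0^D, s_1, …, s_{n-1}` of `D n`. -/
def DGens (n : ℕ) : Set (Bgrp n) :=
  { b | (∃ h : 1 < n,
          b = (Equiv.swap ⟨0, Nat.lt_of_succ_lt h⟩ ⟨1, h⟩, fun (j : Fin n) => decide ((j : ℕ) < 2))) ∨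
        (∃ (i : ℕ) (h : i + 1 < n),
          b = (Equiv.swap ⟨i, Nat.lt_of_succ_lt h⟩ ⟨i+1, h⟩, fun _ => false)) }

/-- Minimal length of an expression as a product of the generators of `D n`. -/
noncomputable def lenD {n : ℕ} (β : Bgrp n) : ℕ :=
  sInf {k | ∃ l : List (Bgrp n), l.length = k ∧ (∀ g ∈ l, g ∈ DGens n) ∧
    l.foldr bmul (bone n) = β}

/-- The even-signed permutation group `D n` as a finset of `B n`. -/
def Dgrp (n : ℕ) : Finset (Bgrp n) := univ.filter (fun γ => Even (N1 γ))

/-- `Δ_n = {γ ∈ B_n : γ(n) > 0}`. -/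
def DeltaSet (n : ℕ) : Finset (Bgrp n) := univ.filter (fun γ => 0 < wdwN γ (n-1))

/-- `|γ|_n`: replace the last window entry by its absolute value. -/
def absLast {n : ℕ} (γ : Bgrp n) : Bgrp n :=
  (γ.1, fun i => if (i : ℕ) = n - 1 then false else γ.2 i)

/-- The `D`-major index. -/
def Dmaj {n : ℕ} (γ : Bgrp n) : ℕ := fmaj (absLast γ)

/-- `-β`: negate all window entries. -/
def negB {n : ℕ} (β : Bgrp n) : Bgrp n := (β.1, fun i => !β.2 i)

/-- Number of inversions of a permutation of `Fin n`. -/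
def invS {n : ℕ} (σ : Equiv.Perm (Fin n)) : ℕ :=
  ((univ : Finset (Fin n × Fin n)).filter
    (fun p => p.1 < p.2 ∧ σ p.2 < σ p.1)).card

/-- Major index of a permutation of `Fin n` (usual order). -/
def majS {n : ℕ} (σ : Equiv.Perm (Fin n)) : ℕ :=
  ∑ i ∈ (range (n-1)).filter
      (fun i => ∀ h : i + 1 < n, σ ⟨i+1, h⟩ < σ ⟨i, Nat.lt_of_succ_lt h⟩), (i+1)

/-- The `q`-analogue `[m]_q = 1 + q + ⋯ + q^{m-1}`, evaluated at a polynomial `q`. -/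
noncomputable def qpoly (m : ℕ) (q : Polynomial ℤ) : Polynomial ℤ := ∑ k ∈ range m, q ^ k

/-!
For `i ≠ j`, `β(i) + β(j) < 0` holds exactly when the entry of larger absolute value is negative.
Hence a negative entry `β(i) = -(k + 1)` lies in exactly `k` of the pairs counted by `N₂`, one for
each entry of smaller absolute value, so `N₂(β) = ∑_{i ∈ Neg(β)} (|β(i)| - 1)` and
`N₁(β) + N₂(β) = ∑_{i ∈ Neg(β)} |β(i)|`.
-/

section PairCounting

variable {ι : Type*} [LinearOrder ι] [Fintype ι]

theorem card_filter_lt_and_or_swap (Q : ι → ι → Prop) [DecidableRel Q]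
    (hQ : ∀ i j, Q i j → ¬ Q j i) :
    #{p : ι × ι | p.1 < p.2 ∧ (Q p.1 p.2 ∨ Q p.2 p.1)} = #{p : ι × ι | Q p.1 p.2} := by
  refine card_nbij' (fun p => if Q p.1 p.2 then p else p.swap)
    (fun p => if p.1 < p.2 then p else p.swap) ?_ ?_ ?_ ?_ <;>
  · rintro ⟨i, j⟩
    have := hQ i j
    have := hQ i i
    grind

theorem card_filter_lt_and_add_neg (x : ι → ℤ) (hx : Function.Injective fun i => |x i|) :
    #{p : ι × ι | p.1 < p.2 ∧ x p.1 + x p.2 < 0} =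
      ∑ i with x i < 0, #{j | |x j| < |x i|} := by
  have hsum_neg : ∀ p : ι × ι, p.1 < p.2 →
      (x p.1 + x p.2 < 0 ↔ (x p.1 < 0 ∧ |x p.2| < |x p.1|) ∨ (x p.2 < 0 ∧ |x p.1| < |x p.2|)) := by
    rintro ⟨i, j⟩ hij
    have : |x i| ≠ |x j| := hx.ne hij.ne
    rcases abs_cases (x i) with hi | hi <;> rcases abs_cases (x j) with hj | hj <;> grind
  rw [filter_congr fun p _ => and_congr_right (hsum_neg p),
    card_filter_lt_and_or_swap (fun i j => x i < 0 ∧ |x j| < |x i|)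
      fun i j hij hji => hij.2.asymm hji.2]
  simp only [card_filter, Fintype.sum_prod_type, sum_filter, ite_and, sum_ite_irrel,
    sum_const_zero]

end PairCounting

theorem Equiv.Perm.card_filter_apply_lt {n : ℕ} (σ : Equiv.Perm (Fin n)) (i : Fin n) :
    #{j | σ j < σ i} = σ i := by
  rw [← Fin.card_Iio]
  exact card_equiv σ fun j => by simp

theorem abs_wdw {n : ℕ} (β : Bgrp n) (i : Fin n) : |wdw β i| = (β.1 i : ℤ) + 1 := by
  unfold wdw
  split <;> simp only [neg_one_mul, one_mul, abs_neg] <;> exact abs_of_pos (by positivity)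

theorem N2_eq_sum_NegB {n : ℕ} (β : Bgrp n) : N2 β = ∑ i ∈ NegB β, (β.1 i : ℕ) := by
  have habs_lt : ∀ i j, |wdw β j| < |wdw β i| ↔ β.1 j < β.1 i := by
    simp [abs_wdw]
  rw [N2, card_filter_lt_and_add_neg (wdw β) fun i j h => β.1.injective <| Fin.ext <| by
    simpa [abs_wdw] using h]
  simp only [habs_lt, Equiv.Perm.card_filter_apply_lt, NegB]

/-- `N₁(β) + N₂(β) = -∑_{i ∈ Neg(β)} β(i)`. -/
theorem stmt1 (n : ℕ) (β : Bgrp n) :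
    (N1 β + N2 β : ℤ) = -∑ i ∈ NegB β, wdw β i := by
  have hneg : ∀ i ∈ NegB β, -wdw β i = (β.1 i : ℤ) + 1 := fun i hi => by
    rw [← abs_wdw, abs_of_neg (mem_filter.mp hi).2]
  rw [N1, N2_eq_sum_NegB, ← sum_neg_distrib, sum_congr rfl hneg, sum_add_distrib]
  push_cast
  rw [card_eq_sum_ones, Nat.cast_sum, Nat.cast_one]
  ring
end

section
/- For every n ∈ ℙ, ∑_{σ ∈ S_n} (-1)^{inv(σ)} q^{maj(σ)} = [1]_q [2]_{-q} [3]_q [4]_{-q} ⋯ [n]_{(-1)^{n-1} q} (the Gessel–Simion formula for the signed Mahonian polynomial of the symmetric group). -/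
open Finset Polynomial

/-! Every `σ ∈ S_{m+1}` arises exactly once from its last value `k` and a `τ ∈ S_m`: list the
values of `τ`, renumbered to skip `k`, then `k`. Appending `k` adds `m - k` inversions, and adds the
descent `m` exactly when `τ` ends in a value `≥ k`. Write `u_m = (-1)^m q`. By induction on `m`, the
sum `F_m(j)` over the `σ ∈ S_{m+1}` ending in `j` is `[1]_{u_0} ⋯ [m]_{u_{m-1}} · u_m^(m-j)`: in the
inductive step the weight `q^(m+1) = u_m^(m+1)` of the new descent turns the sum over the previous
last value into the rotated geometric sum `[m+1]_{u_m} · u_m^(m+1-j)`, and `(-1)^(m+1-j)` from the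
inversions makes `u_{m+1} = -u_m`. Summing `F_m(j)` over `j` gives one more geometric sum. -/

lemma Fin.card_filter_le_val (m k : ℕ) : #{v : Fin m | k ≤ (v : ℕ)} = m - k := by
  have := card_filter_add_card_filter_not (s := (univ : Finset (Fin m))) (fun v => (v : ℕ) < k)
  simp only [Fin.card_filter_val_lt, not_lt, card_univ, Fintype.card_fin] at this
  omega

namespace Equiv.Perm

lemma card_filter_le_apply {m : ℕ} (k : ℕ) (τ : Perm (Fin m)) :
    #{i | k ≤ (τ i : ℕ)} = m - k := by
  rw [card_filter, Equiv.sum_comp τ (fun v => if k ≤ (v : ℕ) then 1 else 0), ← card_filter,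
    Fin.card_filter_le_val]

def insertLast {m : ℕ} (k : Fin (m + 1)) (τ : Perm (Fin m)) : Perm (Fin (m + 1)) :=
  (finSuccEquiv' (Fin.last m)).trans ((optionCongr τ).trans (finSuccEquiv' k).symm)

@[simp]
lemma insertLast_last {m : ℕ} (k : Fin (m + 1)) (τ : Perm (Fin m)) :
    insertLast k τ (Fin.last m) = k := by
  simp [insertLast]

@[simp]
lemma insertLast_castSucc {m : ℕ} (k : Fin (m + 1)) (τ : Perm (Fin m)) (j : Fin m) :
    insertLast k τ j.castSucc = k.succAbove (τ j) := by
  simp [insertLast, ← Fin.succAbove_last, finSuccEquiv'_succAbove]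

lemma insertLast_injective {m : ℕ} :
    Function.Injective (fun p : Fin (m + 1) × Perm (Fin m) => insertLast p.1 p.2) := by
  rintro ⟨k, τ⟩ ⟨k', τ'⟩ h
  have hk : k = k' := by simpa using congr($h (Fin.last m))
  subst hk
  have hτ : τ = τ' := ext fun j => by simpa using congr($h j.castSucc)
  rw [hτ]

lemma insertLast_bijective {m : ℕ} :
    Function.Bijective (fun p : Fin (m + 1) × Perm (Fin m) => insertLast p.1 p.2) :=
  (Fintype.bijective_iff_injective_and_card _).2
    ⟨insertLast_injective, by simp [Fintype.card_perm, Nat.factorial_succ]⟩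

lemma sum_filter_apply_last_eq {M : Type*} [AddCommMonoid M] {m : ℕ} (k : Fin (m + 1))
    (f : Perm (Fin (m + 1)) → M) :
    ∑ σ with σ (Fin.last m) = k, f σ = ∑ τ, f (insertLast k τ) := by
  symm
  refine sum_nbij (insertLast k) (by simp) (fun τ _ τ' _ h => ?_) (fun σ hσ => ?_) (by simp)
  · exact congr_arg Prod.snd (insertLast_injective (a₁ := (k, τ)) (a₂ := (k, τ')) h)
  · obtain ⟨⟨k', τ⟩, rfl⟩ := insertLast_bijective.2 σ
    simp only [coe_filter, mem_univ, true_and, Set.mem_ofPred_eq, insertLast_last] at hσ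
    exact ⟨τ, by simp, by simp [hσ]⟩

end Equiv.Perm

open Equiv.Perm

lemma invS_eq_sum {n : ℕ} (σ : Equiv.Perm (Fin n)) :
    invS σ = ∑ a, ∑ b, if a < b ∧ σ b < σ a then 1 else 0 := by
  rw [invS, card_filter, ← univ_product_univ, sum_product]

lemma invS_insertLast {m : ℕ} (k : Fin (m + 1)) (τ : Equiv.Perm (Fin m)) :
    invS (insertLast k τ) = invS τ + (m - k) := by
  rw [invS_eq_sum, invS_eq_sum, Fin.sum_univ_castSucc]
  simp only [Fin.sum_univ_castSucc, insertLast_castSucc, insertLast_last]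
  simp [sum_add_distrib, (Fin.castSucc_lt_last _).not_gt, Fin.lt_succAbove_iff_le_castSucc,
    Fin.le_def, τ.card_filter_le_apply]

lemma majS_eq_sum {m : ℕ} (σ : Equiv.Perm (Fin (m + 1))) :
    majS σ = ∑ i : Fin m, if σ i.succ < σ i.castSucc then (i : ℕ) + 1 else 0 := by
  rw [majS, sum_filter, Nat.add_sub_cancel, ← Fin.sum_univ_eq_sum_range]
  refine sum_congr rfl fun i _ => ?_
  simp [Fin.succ, Fin.castSucc, Fin.castAdd, Fin.castLE, i.isLt]

lemma majS_insertLast {m : ℕ} (k : Fin (m + 2)) (τ : Equiv.Perm (Fin (m + 1))) :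
    majS (insertLast k τ) = majS τ + if k ≤ (τ (Fin.last m)).castSucc then m + 1 else 0 := by
  rw [majS_eq_sum, majS_eq_sum, Fin.sum_univ_castSucc]
  simp only [Fin.succ_castSucc, Fin.succ_last, insertLast_castSucc, insertLast_last,
    Fin.succAbove_lt_succAbove_iff, Fin.lt_succAbove_iff_le_castSucc, Fin.val_last,
    Fin.val_castSucc]

noncomputable def signedMajWeight {n : ℕ} (σ : Equiv.Perm (Fin n)) : ℤ[X] :=
  (-1) ^ invS σ * X ^ majS σ

lemma signedMajWeight_insertLast {m : ℕ} (k : Fin (m + 2)) (τ : Equiv.Perm (Fin (m + 1))) :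
    signedMajWeight (insertLast k τ) =
      (-1) ^ (m + 1 - k) * X ^ (if k ≤ (τ (Fin.last m)).castSucc then m + 1 else 0) *
        signedMajWeight τ := by
  rw [signedMajWeight, signedMajWeight, invS_insertLast, majS_insertLast, pow_add, pow_add]
  ring

lemma sum_range_ite_pow_mul_pow {R : Type*} [Semiring R] (u : R) {n j : ℕ} (hj : j ≤ n + 1) :
    ∑ v ∈ range (n + 1), (if j ≤ v then u ^ (n + 1) else 1) * u ^ (n - v) =
      (∑ i ∈ range (n + 1), u ^ i) * u ^ (n + 1 - j) := by
  obtain ⟨l, hl⟩ : ∃ l, n + 1 = j + l := ⟨n + 1 - j, by omega⟩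
  rw [sum_mul, hl, sum_range_add, sum_range_add]
  congr 1
  · rw [← sum_range_reflect]
    refine sum_congr rfl fun v hv => ?_
    rw [mem_range] at hv
    rw [if_neg (by omega), one_mul, ← pow_add]
    congr 1
    omega
  · rw [← sum_range_reflect]
    refine sum_congr rfl fun v hv => ?_
    rw [mem_range] at hv
    rw [if_pos (by omega), ← pow_add, ← pow_add]
    congr 1
    omega

lemma sum_signedMajWeight_filter_apply_last (n : ℕ) (j : Fin (n + 1)) :
    ∑ σ with σ (Fin.last n) = j, signedMajWeight σ =
      (∏ i ∈ range n, qpoly (i + 1) ((-1) ^ i * X)) * ((-1) ^ n * X) ^ (n - j) := by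
  induction n with
  | zero =>
    simp [signedMajWeight, invS, majS, Subsingleton.elim (α := Equiv.Perm (Fin 1)) _ 1,
      Subsingleton.elim (α := Fin 1) _ 0]
  | succ n ih =>
    set P := ∏ i ∈ range n, qpoly (i + 1) ((-1) ^ i * X)
    set u : ℤ[X] := (-1) ^ n * X
    have hX : X ^ (n + 1) = u ^ (n + 1) := by
      rw [mul_pow, ← pow_mul, (Nat.even_mul_succ_self n).neg_one_pow, one_mul]
    calc ∑ σ with σ (Fin.last (n + 1)) = j, signedMajWeight σ
        = ∑ τ, signedMajWeight (insertLast j τ) := sum_filter_apply_last_eq j _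
      _ = ∑ v : Fin (n + 1), (-1) ^ (n + 1 - j) *
            X ^ (if j ≤ v.castSucc then n + 1 else 0) * (P * u ^ (n - v)) := by
        rw [← sum_fiberwise univ fun τ => τ (Fin.last n)]
        refine sum_congr rfl fun v _ => ?_
        rw [← ih v, mul_sum]
        refine sum_congr rfl fun τ hτ => ?_
        rw [signedMajWeight_insertLast, (mem_filter.1 hτ).2]
      _ = (-1) ^ (n + 1 - j) * P *
            ∑ v ∈ range (n + 1), (if j ≤ v then u ^ (n + 1) else 1) * u ^ (n - v) := by
        rw [mul_sum, ← Fin.sum_univ_eq_sum_range]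
        refine sum_congr rfl fun v _ => ?_
        simp only [Fin.le_def, Fin.val_castSucc]
        split_ifs <;> simp [hX] <;> ring
      _ = P * qpoly (n + 1) u * (-u) ^ (n + 1 - j) := by
        rw [sum_range_ite_pow_mul_pow u j.is_le, neg_pow, qpoly]
        ring
      _ = _ := by
        rw [prod_range_succ, pow_succ, mul_neg_one, neg_mul]

theorem stmt5_general (n : ℕ) :
    ∑ σ : Equiv.Perm (Fin n), (-1 : Polynomial ℤ) ^ invS σ * X ^ majS σ =
      ∏ i ∈ range n, qpoly (i+1) ((-1 : Polynomial ℤ) ^ i * X) := by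
  cases n with
  | zero => simp [invS, majS]
  | succ m =>
    calc ∑ σ : Equiv.Perm (Fin (m + 1)), signedMajWeight σ
        = ∑ j, ∑ σ with σ (Fin.last m) = j, signedMajWeight σ := (sum_fiberwise _ _ _).symm
      _ = ∑ j : Fin (m + 1), (∏ i ∈ range m, qpoly (i + 1) ((-1) ^ i * X)) *
            ((-1) ^ m * X) ^ (m - j) :=
        sum_congr rfl fun j _ => sum_signedMajWeight_filter_apply_last m j
      _ = _ := by
        rw [← mul_sum, prod_range_succ, qpoly, ← sum_range_reflect,
          Fin.sum_univ_eq_sum_range (fun j => ((-1) ^ m * X) ^ (m - j))]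
        simp

/-- Gessel–Simion: `∑_{σ ∈ S_n} (-1)^{inv σ} q^{maj σ} = [1]_q [2]_{-q} ⋯ [n]_{(-1)^{n-1} q}`. -/
theorem stmt5 (n : ℕ) (hn : 0 < n) :
    ∑ σ : Equiv.Perm (Fin n), (-1 : Polynomial ℤ) ^ invS σ * X ^ majS σ =
      ∏ i ∈ range n, qpoly (i+1) ((-1 : Polynomial ℤ) ^ i * X) :=
  stmt5_general n
end

section
/- For every n ∈ ℙ, ∑_{β ∈ B_n} (-1)^{ℓ_B(β)} q^{fmaj(β)} = [2]_{-q} [4]_q [6]_{-q} ⋯ [2n]_{(-1)^n q} (the Adin–Gessel–Roichman formula). -/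
open Finset Polynomial

/-! ### Auxiliary: q-polynomial lemmas -/

lemma sum_range_split {M : Type*} [AddCommMonoid M] (f : ℕ → M) (a b : ℕ) :
    ∑ j ∈ range (a + b), f j = (∑ j ∈ range a, f j) + ∑ j ∈ range b, f (a + j) := by
  induction b with
  | zero => simp
  | succ b ih => rw [← Nat.add_assoc, Finset.sum_range_succ, ih, Finset.sum_range_succ, add_assoc]

lemma qpoly_add (a b : ℕ) (u : Polynomial ℤ) :
    qpoly (a + b) u = qpoly a u + u ^ a * qpoly b u := by
  unfold qpoly
  rw [sum_range_split, Finset.mul_sum]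
  simp [pow_add]

/-! ### Auxiliary: the sign character and the parity of `lenB` -/

def epsZ {n : ℕ} (β : Bgrp n) : ℤ := (Equiv.Perm.sign β.1 : ℤ) * (-1) ^ (N1 β)

lemma wdw_neg_iff {n : ℕ} (β : Bgrp n) (i : Fin n) : wdw β i < 0 ↔ β.2 i = true := by
  unfold wdw
  have h : (0:ℤ) < (β.1 i : ℤ) + 1 := by positivity
  cases hb : β.2 i <;> simp <;> omega

lemma N1_eq {n : ℕ} (β : Bgrp n) : N1 β = (univ.filter (fun i => β.2 i = true)).card := by
  unfold N1 NegB
  congr 1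
  apply Finset.filter_congr
  intro i _
  simp [wdw_neg_iff]

lemma neg_one_pow_N1 {n : ℕ} (β : Bgrp n) :
    ((-1 : ℤ)) ^ (N1 β) = ∏ i : Fin n, (if β.2 i then -1 else 1) := by
  rw [N1_eq, Finset.prod_ite, Finset.prod_const, Finset.prod_const, one_pow, mul_one]

lemma epsZ_bmul {n : ℕ} (β γ : Bgrp n) : epsZ (bmul β γ) = epsZ β * epsZ γ := by
  unfold epsZ
  rw [neg_one_pow_N1, neg_one_pow_N1, neg_one_pow_N1]
  have hsign : (Equiv.Perm.sign (bmul β γ).1 : ℤ) =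
      (Equiv.Perm.sign β.1 : ℤ) * (Equiv.Perm.sign γ.1 : ℤ) := by
    show ((Equiv.Perm.sign (β.1 * γ.1) : ℤˣ) : ℤ) = _
    rw [map_mul]; push_cast; ring
  rw [hsign]
  have hprod : ∏ i : Fin n, (if (bmul β γ).2 i then (-1:ℤ) else 1) =
      (∏ i : Fin n, (if β.2 i then (-1:ℤ) else 1)) * ∏ i : Fin n, (if γ.2 i then (-1:ℤ) else 1) := by
    rw [← Finset.prod_mul_distrib]
    have : ∀ i : Fin n, (if (bmul β γ).2 i then (-1:ℤ) else 1) =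
        (if β.2 (γ.1 i) then (-1:ℤ) else 1) * (if γ.2 i then (-1:ℤ) else 1) := by
      intro i
      show (if xor (γ.2 i) (β.2 (γ.1 i)) then (-1:ℤ) else 1) = _
      cases hg : γ.2 i <;> cases hb : β.2 (γ.1 i) <;> simp [hg, hb]
    rw [Finset.prod_congr rfl (fun i _ => this i), Finset.prod_mul_distrib,
      Equiv.prod_comp γ.1 (fun j => (if β.2 j then (-1:ℤ) else 1))]
    exact Finset.prod_mul_distrib.symm
  rw [hprod]; ring

lemma epsZ_bone (n : ℕ) : epsZ (bone n) = 1 := by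
  unfold epsZ bone
  rw [neg_one_pow_N1]
  simp

/-! ### Every element of `B n` is a product of generators -/

lemma bone_bmul {n : ℕ} (x : Bgrp n) : bmul (bone n) x = x := by
  unfold bmul bone
  refine Prod.ext (one_mul _) ?_
  funext i
  simp

lemma bmul_bone {n : ℕ} (x : Bgrp n) : bmul x (bone n) = x := by
  unfold bmul bone
  refine Prod.ext (mul_one _) ?_
  funext i
  simp

lemma bmul_assoc {n : ℕ} (a b c : Bgrp n) : bmul (bmul a b) c = bmul a (bmul b c) := by
  unfold bmul
  refine Prod.ext (mul_assoc _ _ _) ?_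
  funext i
  simp [Bool.xor_assoc]

lemma foldr_from_bone {n : ℕ} (l : List (Bgrp n)) (x : Bgrp n) :
    l.foldr bmul x = bmul (l.foldr bmul (bone n)) x := by
  induction l with
  | nil => simp [bone_bmul]
  | cons a t ih => simp only [List.foldr_cons, ih, bmul_assoc]

def isWord {n : ℕ} (β : Bgrp n) : Prop :=
  ∃ l : List (Bgrp n), (∀ g ∈ l, g ∈ BGens n) ∧ l.foldr bmul (bone n) = β

lemma isWord_bone (n : ℕ) : isWord (bone n) := ⟨[], by simp, rfl⟩

lemma isWord_gen {n : ℕ} {g : Bgrp n} (hg : g ∈ BGens n) : isWord g :=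
  ⟨[g], by simpa using hg, by simp [bmul_bone]⟩

lemma isWord_bmul {n : ℕ} {β γ : Bgrp n} (hβ : isWord β) (hγ : isWord γ) :
    isWord (bmul β γ) := by
  obtain ⟨l1, hl1, e1⟩ := hβ
  obtain ⟨l2, hl2, e2⟩ := hγ
  refine ⟨l1 ++ l2, ?_, ?_⟩
  · intro g hgmem
    rcases List.mem_append.1 hgmem with h | h
    · exact hl1 g h
    · exact hl2 g h
  · rw [List.foldr_append, e2, foldr_from_bone, e1]

lemma isWord_perm_word {n : ℕ} (σ τ : Equiv.Perm (Fin n))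
    (h1 : isWord ((σ, fun _ => false) : Bgrp n)) (h2 : isWord ((τ, fun _ => false) : Bgrp n)) :
    isWord ((σ * τ, fun _ => false) : Bgrp n) := by
  have hmm := isWord_bmul h1 h2
  have : bmul ((σ, fun _ => false) : Bgrp n) ((τ, fun _ => false) : Bgrp n)
      = ((σ * τ, fun _ => false) : Bgrp n) := by
    unfold bmul
    refine Prod.ext rfl ?_
    funext i
    simp
  rwa [this] at hmm

lemma isWord_swap {n : ℕ} (x y : Fin n) (hxy : x ≠ y) :
    isWord ((Equiv.swap x y, fun _ => false) : Bgrp n) := by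
  -- strong induction on the distance
  have main : ∀ d : ℕ, ∀ x y : Fin n, (x:ℕ) < (y:ℕ) → (y:ℕ) - (x:ℕ) = d →
      isWord ((Equiv.swap x y, fun _ => false) : Bgrp n) := by
    intro d
    induction d using Nat.strong_induction_on with
    | _ d ih =>
      intro x y hlt hd
      rcases Nat.lt_or_ge 1 d with hd1 | hd1
      · -- non-adjacent: y - x = d ≥ 2
        set z : Fin n := ⟨(y:ℕ) - 1, Nat.lt_of_le_of_lt (Nat.sub_le _ _) y.isLt⟩ with hz
        have hzv : (z:ℕ) = (y:ℕ) - 1 := rfl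
        have hzy : (z:ℕ) < (y:ℕ) := by omega
        have hxz : (x:ℕ) < (z:ℕ) := by omega
        have hxzne : x ≠ z := Fin.ne_of_val_ne (Nat.ne_of_lt hxz)
        have hzyne : z ≠ y := Fin.ne_of_val_ne (Nat.ne_of_lt hzy)
        have hxyne : x ≠ y := Fin.ne_of_val_ne (Nat.ne_of_lt hlt)
        have w1 : isWord ((Equiv.swap z y, fun _ => false) : Bgrp n) :=
          ih 1 (by omega) z y hzy (by omega)
        have w2 : isWord ((Equiv.swap x z, fun _ => false) : Bgrp n) :=
          ih (d-1) (by omega) x z hxz (by omega)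
        have key : Equiv.swap z y * Equiv.swap x z * Equiv.swap z y = Equiv.swap x y := by
          rw [Equiv.swap_mul_swap_mul_swap hxzne hxyne, Equiv.swap_comm]
        have := isWord_perm_word _ _ (isWord_perm_word _ _ w1 w2) w1
        rwa [key] at this
      · -- adjacent: d = 1
        have hd1' : d = 1 := by omega
        have hy : (x:ℕ) + 1 = (y:ℕ) := by omega
        have hgen : ((Equiv.swap x y, fun _ => false) : Bgrp n) ∈ BGens n := by
          right
          refine ⟨(x:ℕ), by omega, ?_⟩
          have hx : (⟨(x:ℕ), Nat.lt_of_succ_lt (by omega)⟩ : Fin n) = x := by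
            apply Fin.ext; rfl
          have hy' : (⟨(x:ℕ)+1, by omega⟩ : Fin n) = y := by
            apply Fin.ext; simp [hy]
          rw [hx, hy']
        exact isWord_gen hgen
  rcases Nat.lt_or_ge (x:ℕ) (y:ℕ) with h | h
  · exact main _ x y h rfl
  · have h' : (y:ℕ) < (x:ℕ) := by
      rcases Nat.lt_or_ge (y:ℕ) (x:ℕ) with h2 | h2
      · exact h2
      · exact absurd (Fin.ext (by omega)) hxy
    rw [Equiv.swap_comm]
    exact main _ y x h' rfl

lemma isWord_perm {n : ℕ} (σ : Equiv.Perm (Fin n)) :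
    isWord ((σ, fun _ => false) : Bgrp n) := by
  refine Equiv.Perm.swap_induction_on σ ?_ ?_
  · exact isWord_bone n
  · intro f x y hxy ihf
    exact isWord_perm_word _ _ (isWord_swap x y hxy) ihf

lemma isWord_flip_k {n : ℕ} : ∀ (k : ℕ) (h : k < n),
    isWord ((1, fun j => decide (j = (⟨k, h⟩ : Fin n))) : Bgrp n) := by
  intro k
  induction k with
  | zero =>
    intro h
    exact isWord_gen (Or.inl ⟨h, rfl⟩)
  | succ k ihk =>
    intro h
    have hk : k < n := Nat.lt_of_succ_lt h
    have ha : ((Equiv.swap ⟨k, hk⟩ ⟨k+1, h⟩, fun _ => false) : Bgrp n) ∈ BGens n :=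
      Or.inr ⟨k, h, rfl⟩
    have wa := isWord_gen ha
    have wp := ihk hk
    have hw := isWord_bmul wa (isWord_bmul wp wa)
    set p : Fin n := ⟨k, hk⟩
    set i : Fin n := ⟨k+1, h⟩
    have hcomp : bmul (Equiv.swap p i, fun _ => false)
        (bmul (1, fun j => decide (j = p)) (Equiv.swap p i, fun _ => false)) =
        ((1, fun j => decide (j = i)) : Bgrp n) := by
      unfold bmul
      refine Prod.ext ?_ ?_
      · show Equiv.swap p i * (1 * Equiv.swap p i) = 1
        rw [one_mul, Equiv.swap_mul_self]
      · funext j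
        simp only [Bool.xor_false, Bool.false_xor, Equiv.Perm.one_apply]
        rw [decide_eq_decide]
        constructor
        · intro hj
          have : Equiv.swap p i j = Equiv.swap p i i := by rw [hj]; rw [Equiv.swap_apply_right]
          exact (Equiv.swap p i).injective (by rw [this, Equiv.swap_apply_right])
        · intro hj; rw [hj]; exact Equiv.swap_apply_right p i
    rwa [hcomp] at hw

lemma isWord_flip {n : ℕ} (i : Fin n) :
    isWord ((1, fun j => decide (j = i)) : Bgrp n) := by
  have := isWord_flip_k (n := n) (i : ℕ) i.isLt
  simpa using this

lemma isWord_signs {n : ℕ} (F : Finset (Fin n)) :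
    isWord ((1, fun j => decide (j ∈ F)) : Bgrp n) := by
  induction F using Finset.induction_on with
  | empty =>
    have : ((1, fun j => decide (j ∈ (∅ : Finset (Fin n)))) : Bgrp n) = bone n := by
      unfold bone; refine Prod.ext rfl ?_; funext j; simp
    rw [this]; exact isWord_bone n
  | @insert a F ha ih =>
    have hw := isWord_bmul (isWord_flip a) ih
    have hcomp : bmul ((1, fun j => decide (j = a)) : Bgrp n) (1, fun j => decide (j ∈ F)) =
        (1, fun j => decide (j ∈ insert a F)) := by
      unfold bmul
      refine Prod.ext (one_mul 1) ?_
      funext j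
      simp only [Equiv.Perm.one_apply]
      by_cases hj : j = a
      · subst hj
        have : j ∉ F := ha
        simp [this]
      · simp [hj, Finset.mem_insert]
    rwa [hcomp] at hw

lemma isWord_all {n : ℕ} (β : Bgrp n) : isWord β := by
  have h1 := isWord_perm β.1
  have h2 : isWord ((1, β.2) : Bgrp n) := by
    have := isWord_signs (univ.filter (fun j => β.2 j = true))
    convert this using 2
    funext j
    by_cases hj : β.2 j = true <;> simp [hj]
  have hw := isWord_bmul h1 h2
  have hcomp : bmul ((β.1, fun _ => false) : Bgrp n) (1, β.2) = β := by
    unfold bmul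
    refine Prod.ext (mul_one _) ?_
    funext j
    simp
  rwa [hcomp] at hw

lemma epsZ_gen {n : ℕ} {g : Bgrp n} (hg : g ∈ BGens n) : epsZ g = -1 := by
  rcases hg with ⟨h, rfl⟩ | ⟨i, h, rfl⟩
  · unfold epsZ
    rw [N1_eq]
    simp [Finset.filter_eq']
  · unfold epsZ
    rw [N1_eq]
    have hne : (⟨i, Nat.lt_of_succ_lt h⟩ : Fin n) ≠ ⟨i+1, h⟩ := by
      simp only [ne_eq, Fin.mk.injEq]
      omega
    simp [Equiv.Perm.sign_swap hne]

lemma epsZ_foldr {n : ℕ} (l : List (Bgrp n)) (hl : ∀ g ∈ l, g ∈ BGens n) :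
    epsZ (l.foldr bmul (bone n)) = (-1) ^ l.length := by
  induction l with
  | nil => simpa using epsZ_bone n
  | cons a t ih =>
    simp only [List.foldr_cons, List.length_cons]
    rw [epsZ_bmul, epsZ_gen (hl a (by simp)), ih (fun g hg => hl g (List.mem_cons_of_mem a hg))]
    ring

lemma neg_one_pow_lenB {n : ℕ} (β : Bgrp n) : ((-1 : ℤ)) ^ (lenB β) = epsZ β := by
  obtain ⟨l, hl, he⟩ := isWord_all β
  have hS : {k | ∃ l : List (Bgrp n), l.length = k ∧ (∀ g ∈ l, g ∈ BGens n) ∧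
      l.foldr bmul (bone n) = β}.Nonempty := ⟨l.length, l, rfl, hl, he⟩
  have hmem := Nat.sInf_mem hS
  obtain ⟨l', hlen, hl', he'⟩ := hmem
  have hll : lenB β = l'.length := hlen.symm
  rw [hll, ← epsZ_foldr l' hl', he']

lemma neg_one_pow_lenB_poly {n : ℕ} (β : Bgrp n) :
    ((-1 : Polynomial ℤ)) ^ (lenB β) = Polynomial.C (epsZ β) := by
  have := congrArg (Polynomial.C : ℤ →+* Polynomial ℤ) (neg_one_pow_lenB β)
  rw [map_pow, map_neg, map_one] at this
  exact this

/-! ### Insertion decomposition of `B (m+1)` -/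

def pIns {m : ℕ} (v : Fin (m+1)) (τ : Equiv.Perm (Fin m)) : Equiv.Perm (Fin (m+1)) :=
  finSuccEquivLast.trans ((Equiv.optionCongr τ).trans (finSuccEquiv' v).symm)

lemma pIns_castSucc {m : ℕ} (v : Fin (m+1)) (τ : Equiv.Perm (Fin m)) (j : Fin m) :
    pIns v τ (Fin.castSucc j) = v.succAbove (τ j) := by
  simp [pIns, finSuccEquivLast_castSucc, finSuccEquiv'_symm_some]

lemma pIns_last {m : ℕ} (v : Fin (m+1)) (τ : Equiv.Perm (Fin m)) :
    pIns v τ (Fin.last m) = v := by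
  simp [pIns, finSuccEquivLast_last, finSuccEquiv'_symm_none]

def Emap {m : ℕ} (β : Bgrp m) (v : Fin (m+1)) (b : Bool) : Bgrp (m+1) :=
  (pIns v β.1, Fin.lastCases b β.2)

lemma Emap_fst_castSucc {m : ℕ} (β : Bgrp m) (v : Fin (m+1)) (b : Bool) (j : Fin m) :
    (Emap β v b).1 (Fin.castSucc j) = v.succAbove (β.1 j) := pIns_castSucc v β.1 j

lemma Emap_fst_last {m : ℕ} (β : Bgrp m) (v : Fin (m+1)) (b : Bool) :
    (Emap β v b).1 (Fin.last m) = v := pIns_last v β.1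

lemma Emap_snd_castSucc {m : ℕ} (β : Bgrp m) (v : Fin (m+1)) (b : Bool) (j : Fin m) :
    (Emap β v b).2 (Fin.castSucc j) = β.2 j := by
  show (Fin.lastCases b β.2 : ∀ _ : Fin (m+1), Bool) (Fin.castSucc j) = β.2 j
  simp

lemma Emap_snd_last {m : ℕ} (β : Bgrp m) (v : Fin (m+1)) (b : Bool) :
    (Emap β v b).2 (Fin.last m) = b := by
  show (Fin.lastCases b β.2 : ∀ _ : Fin (m+1), Bool) (Fin.last m) = b
  simp

lemma Emap_bij {m : ℕ} :
    Function.Bijective (fun x : Bgrp m × (Fin (m+1) × Bool) => Emap x.1 x.2.1 x.2.2) := by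
  rw [Fintype.bijective_iff_injective_and_card]
  constructor
  · rintro ⟨⟨τ, s⟩, v, b⟩ ⟨⟨τ', s'⟩, v', b'⟩ h
    simp only at h
    have hv : v = v' := by
      have := congrArg (fun γ : Bgrp (m+1) => γ.1 (Fin.last m)) h
      simpa [Emap_fst_last] using this
    have hb : b = b' := by
      have := congrArg (fun γ : Bgrp (m+1) => γ.2 (Fin.last m)) h
      simpa [Emap_snd_last] using this
    have hτ : τ = τ' := by
      apply Equiv.ext
      intro j
      have := congrArg (fun γ : Bgrp (m+1) => γ.1 (Fin.castSucc j)) h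
      simp only [Emap_fst_castSucc] at this
      rw [hv] at this
      exact Fin.succAbove_right_injective this
    have hs : s = s' := by
      funext j
      have := congrArg (fun γ : Bgrp (m+1) => γ.2 (Fin.castSucc j)) h
      simpa [Emap_snd_castSucc] using this
    rw [hv, hb, hτ, hs]
  · simp only [Fintype.card_prod, Fintype.card_perm, Fintype.card_fun, Fintype.card_fin,
      Fintype.card_bool, Nat.factorial_succ]
    ring

lemma sum_Emap {m : ℕ} (G : Bgrp (m+1) → Polynomial ℤ) :
    ∑ β : Bgrp (m+1), G β = ∑ β' : Bgrp m, ∑ v : Fin (m+1), ∑ b : Bool, G (Emap β' v b) := by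
  rw [← Fintype.sum_bijective _ (Emap_bij (m := m)) _ G (fun x => rfl)]
  rw [Fintype.sum_prod_type]
  congr 1
  funext β'
  rw [Fintype.sum_prod_type]

/-! ### Statistics under insertion -/

lemma N1_Emap {m : ℕ} (β : Bgrp m) (v : Fin (m+1)) (b : Bool) :
    N1 (Emap β v b) = N1 β + (if b then 1 else 0) := by
  rw [N1_eq, N1_eq, Finset.card_filter, Finset.card_filter, Fin.sum_univ_castSucc]
  simp only [Emap_snd_castSucc, Emap_snd_last]

lemma sign_pIns_lastv {m : ℕ} (τ : Equiv.Perm (Fin m)) :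
    Equiv.Perm.sign (pIns (Fin.last m) τ) = Equiv.Perm.sign τ := by
  have h : pIns (Fin.last m) τ = Equiv.permCongr finSuccEquivLast.symm (Equiv.optionCongr τ) := by
    apply Equiv.ext
    intro x
    induction x using Fin.lastCases with
    | last =>
      rw [pIns_last]
      simp [Equiv.permCongr_apply, finSuccEquivLast_last]
    | cast j =>
      rw [pIns_castSucc]
      simp [Equiv.permCongr_apply, finSuccEquivLast_castSucc, Fin.succAbove_last]
  rw [h, Equiv.Perm.sign_permCongr, Equiv.optionCongr_sign]

lemma pIns_mul {m : ℕ} (v : Fin (m+1)) (τ : Equiv.Perm (Fin m)) :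
    pIns v τ = pIns v 1 * pIns (Fin.last m) τ := by
  apply Equiv.ext
  intro x
  induction x using Fin.lastCases with
  | last => rw [pIns_last, Equiv.Perm.mul_apply, pIns_last, pIns_last]
  | cast j =>
    rw [pIns_castSucc, Equiv.Perm.mul_apply, pIns_castSucc, Fin.succAbove_last_apply,
      pIns_castSucc, Equiv.Perm.one_apply]

lemma pIns_one_swap {m : ℕ} (i : Fin m) :
    pIns (Fin.castSucc i) (1 : Equiv.Perm (Fin m)) =
      Equiv.swap (Fin.castSucc i) i.succ * pIns i.succ (1 : Equiv.Perm (Fin m)) := by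
  apply Equiv.ext
  intro x
  induction x using Fin.lastCases with
  | last =>
    rw [pIns_last, Equiv.Perm.mul_apply, pIns_last, Equiv.swap_apply_right]
  | cast j =>
    simp only [pIns_castSucc, Equiv.Perm.mul_apply, Equiv.Perm.one_apply]
    rcases lt_trichotomy (j : ℕ) (i : ℕ) with hlt | heq | hgt
    · have h1 : (Fin.castSucc i).succAbove j = Fin.castSucc j :=
        Fin.succAbove_of_castSucc_lt _ _ (by rw [Fin.lt_def]; simp only [Fin.coe_castSucc]; exact hlt)
      have h2 : (i.succ).succAbove j = Fin.castSucc j :=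
        Fin.succAbove_of_castSucc_lt _ _ (by rw [Fin.lt_def]; simp only [Fin.coe_castSucc, Fin.val_succ]; omega)
      rw [h1, h2, Equiv.swap_apply_of_ne_of_ne]
      · intro hc; rw [Fin.ext_iff] at hc; simp at hc; omega
      · intro hc; rw [Fin.ext_iff] at hc; simp at hc; omega
    · have h1 : (Fin.castSucc i).succAbove j = j.succ :=
        Fin.succAbove_of_le_castSucc _ _ (by rw [Fin.le_def]; simp only [Fin.coe_castSucc]; omega)
      have h2 : (i.succ).succAbove j = Fin.castSucc j :=
        Fin.succAbove_of_castSucc_lt _ _ (by rw [Fin.lt_def]; simp only [Fin.coe_castSucc, Fin.val_succ]; omega)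
      rw [h1, h2]
      have : Fin.castSucc j = Fin.castSucc i := by rw [Fin.ext_iff]; simp [heq]
      rw [this, Equiv.swap_apply_left]
      rw [Fin.ext_iff]; simp [heq]
    · have h1 : (Fin.castSucc i).succAbove j = j.succ :=
        Fin.succAbove_of_le_castSucc _ _ (by rw [Fin.le_def]; simp only [Fin.coe_castSucc, Fin.val_succ]; omega)
      have h2 : (i.succ).succAbove j = j.succ :=
        Fin.succAbove_of_le_castSucc _ _ (by rw [Fin.le_def]; simp only [Fin.coe_castSucc, Fin.val_succ]; omega)
      rw [h1, h2, Equiv.swap_apply_of_ne_of_ne]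
      · intro hc; rw [Fin.ext_iff] at hc; simp at hc; omega
      · intro hc; rw [Fin.ext_iff] at hc; simp at hc; omega

lemma sign_pIns_one {m : ℕ} (v : Fin (m+1)) :
    (Equiv.Perm.sign (pIns v (1 : Equiv.Perm (Fin m))) : ℤ) = (-1) ^ (m - (v : ℕ)) := by
  induction v using Fin.reverseInduction with
  | last =>
    have h1 : pIns (Fin.last m) (1 : Equiv.Perm (Fin m)) = 1 := by
      apply Equiv.ext
      intro x
      induction x using Fin.lastCases with
      | last => rw [pIns_last]; rfl
      | cast j => rw [pIns_castSucc, Equiv.Perm.one_apply, Fin.succAbove_last_apply]; rfl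
    rw [h1]
    simp
  | cast i ih =>
    rw [pIns_one_swap, map_mul]
    have hne : Fin.castSucc i ≠ i.succ := by
      intro hc
      rw [Fin.ext_iff] at hc
      simp at hc
    rw [Equiv.Perm.sign_swap hne]
    push_cast
    rw [ih]
    have h1 : m - (Fin.castSucc i : ℕ) = (m - (i.succ : ℕ)) + 1 := by
      simp only [Fin.coe_castSucc, Fin.val_succ]
      omega
    rw [h1, pow_succ]
    ring

lemma sign_pIns {m : ℕ} (v : Fin (m+1)) (τ : Equiv.Perm (Fin m)) :
    (Equiv.Perm.sign (pIns v τ) : ℤ) = (-1) ^ (m - (v : ℕ)) * (Equiv.Perm.sign τ : ℤ) := by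
  rw [pIns_mul, map_mul]
  push_cast
  rw [sign_pIns_one, sign_pIns_lastv]

lemma epsZ_Emap {m : ℕ} (β : Bgrp m) (v : Fin (m+1)) (b : Bool) :
    epsZ (Emap β v b) = epsZ β * (-1) ^ (m - (v : ℕ)) * (if b then -1 else 1) := by
  unfold epsZ
  rw [N1_Emap]
  show (Equiv.Perm.sign (pIns v β.1) : ℤ) * _ = _
  rw [sign_pIns, pow_add]
  cases b <;> simp <;> ring

/-! ### Major index under insertion -/

def DC {k : ℕ} (b s : Bool) (v : Fin (k+2)) (t : Fin (k+1)) : Prop :=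
  (b = true ∧ s = false) ∨ (b = s ∧ (v : ℕ) ≤ (t : ℕ))

instance {k : ℕ} (b s : Bool) (v : Fin (k+2)) (t : Fin (k+1)) : Decidable (DC b s v t) := by
  unfold DC; infer_instance

lemma precLt_scale (p q : Bool) (x y x' y' : ℕ) (h1 : x < y ↔ x' < y') (h2 : y < x ↔ y' < x') :
    (precLt ((if p then -1 else 1) * ((x:ℤ)+1)) ((if q then -1 else 1) * ((y:ℤ)+1)) ↔
     precLt ((if p then -1 else 1) * ((x':ℤ)+1)) ((if q then -1 else 1) * ((y':ℤ)+1))) := by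
  unfold precLt
  cases p <;> cases q <;> simp <;> omega

lemma wdwN_eq {n : ℕ} (β : Bgrp n) (i : ℕ) (hi : i < n) :
    wdwN β i = (if β.2 ⟨i, hi⟩ then -1 else 1) * ((β.1 ⟨i, hi⟩ : ℤ) + 1) := by
  unfold wdwN
  rw [dif_pos hi]
  rfl

lemma wdwN_Emap_lt {k : ℕ} (β : Bgrp (k+1)) (v : Fin (k+2)) (b : Bool) (i : ℕ) (hi : i < k+1) :
    wdwN (Emap β v b) i =
      (if β.2 ⟨i, hi⟩ then -1 else 1) * ((v.succAbove (β.1 ⟨i, hi⟩) : ℤ) + 1) := by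
  have hi2 : i < k+2 := by omega
  rw [wdwN_eq _ i hi2]
  have hcast : (⟨i, hi2⟩ : Fin (k+2)) = Fin.castSucc ⟨i, hi⟩ := rfl
  rw [hcast, Emap_snd_castSucc, Emap_fst_castSucc]

lemma wdwN_Emap_last {k : ℕ} (β : Bgrp (k+1)) (v : Fin (k+2)) (b : Bool) :
    wdwN (Emap β v b) (k+1) = (if b then -1 else 1) * ((v:ℤ)+1) := by
  rw [wdwN_eq _ (k+1) (by omega)]
  have hcast : (⟨k+1, by omega⟩ : Fin (k+2)) = Fin.last (k+1) := rfl
  rw [hcast, Emap_snd_last, Emap_fst_last]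

lemma succAbove_val_lt_iff {k : ℕ} (v : Fin (k+2)) (a c : Fin (k+1)) :
    ((v.succAbove a : ℕ) < (v.succAbove c : ℕ)) ↔ ((a:ℕ) < (c:ℕ)) := by
  rw [← Fin.lt_def, ← Fin.lt_def, Fin.succAbove_lt_succAbove_iff]

lemma precLt_last_iff {k : ℕ} (b s : Bool) (v : Fin (k+2)) (t : Fin (k+1)) :
    precLt ((if b then -1 else 1) * ((v:ℤ)+1))
      ((if s then -1 else 1) * ((v.succAbove t : ℤ)+1)) ↔ DC b s v t := by
  have hvt : ((v:ℕ) < (v.succAbove t : ℕ)) ↔ ((v:ℕ) ≤ (t:ℕ)) := by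
    rw [← Fin.lt_def, Fin.lt_succAbove_iff_le_castSucc, Fin.le_def, Fin.coe_castSucc]
  unfold DC precLt
  cases b <;> cases s <;> simp <;> omega

lemma majB_Emap {k : ℕ} (β : Bgrp (k+1)) (v : Fin (k+2)) (b : Bool) :
    majB (Emap β v b) = majB β +
      (k+1) * (if DC b (β.2 (Fin.last k)) v (β.1 (Fin.last k)) then 1 else 0) := by
  unfold majB DesB
  rw [Finset.sum_filter, Finset.sum_filter]
  rw [show k + 2 - 1 = k + 1 from rfl, show k + 1 - 1 = k from rfl]
  rw [Finset.sum_range_succ]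
  congr 1
  · apply Finset.sum_congr rfl
    intro i hi
    rw [Finset.mem_range] at hi
    rw [wdwN_Emap_lt β v b i (by omega), wdwN_Emap_lt β v b (i+1) (by omega),
      wdwN_eq β i (by omega), wdwN_eq β (i+1) (by omega)]
    refine if_congr ?_ rfl rfl
    exact precLt_scale _ _ _ _ _ _ (succAbove_val_lt_iff v _ _) (succAbove_val_lt_iff v _ _)
  · rw [wdwN_Emap_last, wdwN_Emap_lt β v b k (by omega)]
    have hlast : (⟨k, by omega⟩ : Fin (k+1)) = Fin.last k := rfl
    rw [hlast]
    rw [if_congr (precLt_last_iff b (β.2 (Fin.last k)) v (β.1 (Fin.last k))) rfl rfl]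
    rw [mul_ite, mul_one, mul_zero]

lemma fmaj_Emap {k : ℕ} (β : Bgrp (k+1)) (v : Fin (k+2)) (b : Bool) :
    fmaj (Emap β v b) = fmaj β +
      (2*(k+1)) * (if DC b (β.2 (Fin.last k)) v (β.1 (Fin.last k)) then 1 else 0) +
      (if b then 1 else 0) := by
  unfold fmaj
  rw [majB_Emap, N1_Emap]
  ring

/-! ### The refined fiber sums and the main induction -/

noncomputable def Fpoly {n : ℕ} (β : Bgrp n) : Polynomial ℤ :=
  Polynomial.C (epsZ β) * X ^ fmaj β

noncomputable def psi (m : ℕ) (v : Fin (m+1)) (b : Bool) : Polynomial ℤ :=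
  ∑ β : Bgrp m, Fpoly (Emap β v b)

noncomputable def Wpoly (m : ℕ) : Polynomial ℤ :=
  ∏ i ∈ range m, qpoly (2*(i+1)) ((-1 : Polynomial ℤ)^(i+1) * X)

lemma sum_by_last {k : ℕ} (H : Fin (k+1) → Bool → Polynomial ℤ) :
    ∑ β : Bgrp (k+1), H (β.1 (Fin.last k)) (β.2 (Fin.last k)) * Fpoly β =
    ∑ v : Fin (k+1), ∑ b : Bool, H v b * psi k v b := by
  rw [sum_Emap (fun β => H (β.1 (Fin.last k)) (β.2 (Fin.last k)) * Fpoly β)]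
  simp only [Emap_fst_last, Emap_snd_last]
  rw [Finset.sum_comm]
  apply Finset.sum_congr rfl
  intro v _
  rw [Finset.sum_comm]
  apply Finset.sum_congr rfl
  intro b _
  rw [psi, ← Finset.mul_sum]

lemma pow_ite01 (P : Prop) [Decidable P] (x : Polynomial ℤ) (r : ℕ) :
    x ^ (r * (if P then 1 else 0)) = if P then x^r else 1 := by
  split <;> simp

lemma neg_pow_X_even (s r : ℕ) :
    (((-1 : Polynomial ℤ)^s) * X)^(2*r) = X^(2*r) := by
  rw [mul_pow, ← pow_mul]
  have he : Even (s * (2*r)) := ⟨s*r, by ring⟩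
  rw [he.neg_one_pow, one_mul]

lemma qpoly_zero (u : Polynomial ℤ) : qpoly 0 u = 0 := by simp [qpoly]

/-- The basic evaluated sum. -/
lemma SUMA (M w : ℕ) (hw : w ≤ M) (u c e : Polynomial ℤ) :
    ∑ v' : Fin M, (if w ≤ (v':ℕ) then c else 1) * (u^(M-1-(v':ℕ)) * e) =
      (c * qpoly (M-w) u + u^(M-w) * qpoly w u) * e := by
  rw [Fin.sum_univ_eq_sum_range (fun j => (if w ≤ j then c else 1) * (u^(M-1-j) * e)) M]
  rw [← Finset.sum_range_reflect]
  have hcong : ∀ j ∈ range M,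
      (if w ≤ M-1-j then c else 1) * (u^(M-1-(M-1-j)) * e) =
      (if j < M - w then c else 1) * (u^j * e) := by
    intro j hj
    rw [Finset.mem_range] at hj
    have h1 : M-1-(M-1-j) = j := by omega
    by_cases hc : w ≤ M-1-j
    · rw [h1, if_pos hc, if_pos (by omega)]
    · rw [h1, if_neg hc, if_neg (by omega)]
  rw [Finset.sum_congr rfl hcong]
  set D := M - w with hD
  rw [show M = D + w by omega, sum_range_split]
  have hA : ∑ j ∈ range D, (if j < D then c else 1) * (u^j * e) =
      c * qpoly D u * e := by
    rw [qpoly, Finset.mul_sum, Finset.sum_mul]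
    apply Finset.sum_congr rfl
    intro j hj
    rw [Finset.mem_range] at hj
    rw [if_pos hj]
    ring
  have hB : ∑ j ∈ range w, (if D + j < D then c else 1) * (u^(D+j) * e) =
      u^D * qpoly w u * e := by
    rw [qpoly, Finset.mul_sum, Finset.sum_mul]
    apply Finset.sum_congr rfl
    intro j hj
    rw [if_neg (by omega), pow_add]
    ring
  rw [hA, hB]
  ring

/-- Core algebraic identity, case `b = false`. -/
lemma coreF (w a : ℕ) (u : Polynomial ℤ) :
    u^(2*(w+a)) * qpoly a u + u^a * qpoly w u + u^(w+a) * qpoly (w+a) u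
      = u^a * qpoly (2*(w+a)) u := by
  rw [show 2*(w+a) = w + ((w+a) + a) by ring]
  rw [qpoly_add w ((w+a)+a) u, qpoly_add (w+a) a u]
  ring

/-- Core algebraic identity, case `b = true`. -/
lemma coreT (w a : ℕ) (u : Polynomial ℤ) :
    u^(2*(w+a)+1) * qpoly (w+a) u + u^(3*(w+a)+1) * qpoly a u + u^((w+a)+a+1) * qpoly w u
      = u^((w+a)+a+1) * qpoly (2*(w+a)) u := by
  rw [show 2*(w+a) = w + ((w+a) + a) by ring]
  rw [qpoly_add w ((w+a)+a) u, qpoly_add (w+a) a u]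
  ring

lemma SUMA' (K w : ℕ) (hw : w ≤ K+1) (u c e : Polynomial ℤ) :
    ∑ v' : Fin (K+1), (if w ≤ (v':ℕ) then c else 1) * (u^(K-(v':ℕ)) * e) =
      (c * qpoly (K+1-w) u + u^(K+1-w) * qpoly w u) * e := by
  have h := SUMA (K+1) w hw u c e
  simpa using h

lemma SUMB (K : ℕ) (u e : Polynomial ℤ) :
    ∑ v' : Fin (K+1), u^(K-(v':ℕ)) * e = qpoly (K+1) u * e := by
  have h := SUMA' K 0 (by omega) u 1 e
  simpa [qpoly_zero] using h

lemma psi_eq (m : ℕ) : ∀ (v : Fin (m+1)) (b : Bool),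
    psi m v b = ((-1 : Polynomial ℤ)^(m+1) * X)^((m - (v:ℕ)) + (m+1)*(if b then 1 else 0)) *
      Wpoly m := by
  induction m with
  | zero =>
    intro v b
    have huniq : ∀ β : Bgrp 0, β = bone 0 := by
      intro β
      refine Prod.ext ?_ ?_
      · apply Equiv.ext; intro i; exact i.elim0
      · funext i; exact i.elim0
    have hU : (univ : Finset (Bgrp 0)) = {bone 0} :=
      Finset.eq_singleton_iff_unique_mem.mpr ⟨Finset.mem_univ _, fun x _ => huniq x⟩
    rw [psi, hU, Finset.sum_singleton]
    have hv0 : (v:ℕ) = 0 := by omega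
    have hmaj : majB (Emap (bone 0) v b) = 0 := by
      unfold majB DesB
      rw [show 0 + 1 - 1 = 0 from rfl]
      simp
    have hN1bone : N1 (bone 0) = 0 := by
      rw [N1_eq]
      simp
    have hfm : fmaj (Emap (bone 0) v b) = (if b then 1 else 0) := by
      unfold fmaj
      rw [hmaj, N1_Emap, hN1bone]
      cases b <;> rfl
    have heps : epsZ (Emap (bone 0) v b) = (if b then -1 else 1) := by
      rw [epsZ_Emap, epsZ_bone]
      simp
    rw [Fpoly, hfm, heps, Wpoly]
    simp only [Finset.range_zero, Finset.prod_empty, mul_one, hv0]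
    cases b
    · simp
    · norm_num [pow_succ]
  | succ k ih =>
    intro v b
    have hstep : psi (k+1) v b =
        (Polynomial.C ((-1:ℤ)^(k+1 - (v:ℕ))) * Polynomial.C (if b then (-1:ℤ) else 1) * X^(if b then 1 else 0)) *
        ∑ v' : Fin (k+1), ∑ b' : Bool,
          (X^((2*(k+1)) * (if DC b b' v v' then 1 else 0))) * psi k v' b' := by
      rw [psi]
      have hterm : ∀ β : Bgrp (k+1), Fpoly (Emap β v b) =
          (Polynomial.C ((-1:ℤ)^(k+1 - (v:ℕ))) * Polynomial.C (if b then (-1:ℤ) else 1) * X^(if b then 1 else 0)) *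
          ((X^((2*(k+1)) * (if DC b (β.2 (Fin.last k)) v (β.1 (Fin.last k)) then 1 else 0))) *
            Fpoly β) := by
        intro β
        rw [Fpoly, Fpoly, epsZ_Emap, fmaj_Emap, pow_add, pow_add]
        simp only [map_mul]
        ring
      rw [Finset.sum_congr rfl (fun β _ => hterm β), ← Finset.mul_sum]
      congr 1
      exact sum_by_last (fun v' b' => X^((2*(k+1)) * (if DC b b' v v' then 1 else 0)))
    rw [hstep]
    have hvle : (v:ℕ) ≤ k+1 := by omega
    obtain ⟨a, ha⟩ : ∃ a, (v:ℕ) + a = k+1 := ⟨k+1-(v:ℕ), by omega⟩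
    set w := (v:ℕ) with hwdef
    set u' : Polynomial ℤ := (-1)^(k+1) * X with hu'
    have hWsucc : Wpoly (k+1) = Wpoly k * qpoly (2*(k+1)) u' := by
      rw [Wpoly, Wpoly, Finset.prod_range_succ]
    have hXev : (X : Polynomial ℤ)^(2*(k+1)) = u'^(2*(k+1)) := by
      rw [hu']
      exact (neg_pow_X_even (k+1) (k+1)).symm
    have hneg : ((-1 : Polynomial ℤ))^(k+1+1) * X = -u' := by
      rw [hu']
      ring
    have hsub : k + 1 - w = a := by omega
    have hX1 : (X : Polynomial ℤ) = (-1 : Polynomial ℤ)^(k+1) * u' := by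
      rw [hu', ← mul_assoc, ← pow_add]
      have he : Even ((k+1)+(k+1)) := ⟨k+1, rfl⟩
      rw [he.neg_one_pow, one_mul]
    clear_value u' w
    cases b with
    | false =>
      have hDC1 : ∀ v' : Fin (k+1), ¬ DC false true v v' := by
        intro v'; simp [DC]
      have hDC2 : ∀ v' : Fin (k+1), DC false false v v' ↔ w ≤ (v':ℕ) := by
        intro v'; simp [DC]; rw [hwdef]
      have hpt : ∀ v' : Fin (k+1), (∑ b' : Bool,
          (X^((2*(k+1)) * (if DC false b' v v' then 1 else 0))) * psi k v' b') =
          u'^(k-(v':ℕ)) * (u'^(k+1) * Wpoly k) +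
          (if w ≤ (v':ℕ) then X^(2*(k+1)) else 1) * (u'^(k-(v':ℕ)) * Wpoly k) := by
        intro v'
        rw [Fintype.sum_bool, ih v' true, ih v' false, pow_ite01, pow_ite01,
          if_neg (hDC1 v'), if_congr (hDC2 v') rfl rfl]
        norm_num
        ring
      rw [Finset.sum_congr rfl (fun v' _ => hpt v'), Finset.sum_add_distrib,
        SUMB k u' (u'^(k+1) * Wpoly k), SUMA' k w hvle u' (X^(2*(k+1))) (Wpoly k)]
      rw [hWsucc, hXev, hneg, hsub]
      rw [show k+1 = w + a by omega]
      simp only [Bool.false_eq_true, if_false, map_one, mul_one, mul_zero, add_zero, pow_zero,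
        map_pow, map_neg]
      linear_combination ((-1 : Polynomial ℤ)^a * Wpoly k) * coreF w a u'
    | true =>
      have hDC1 : ∀ v' : Fin (k+1), DC true false v v' := by
        intro v'; simp [DC]
      have hDC2 : ∀ v' : Fin (k+1), DC true true v v' ↔ w ≤ (v':ℕ) := by
        intro v'; simp [DC]; rw [hwdef]
      have hpt : ∀ v' : Fin (k+1), (∑ b' : Bool,
          (X^((2*(k+1)) * (if DC true b' v v' then 1 else 0))) * psi k v' b') =
          (if w ≤ (v':ℕ) then X^(2*(k+1)) else 1) * (u'^(k-(v':ℕ)) * (u'^(k+1) * Wpoly k)) +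
          u'^(k-(v':ℕ)) * (X^(2*(k+1)) * Wpoly k) := by
        intro v'
        rw [Fintype.sum_bool, ih v' true, ih v' false, pow_ite01, pow_ite01,
          if_pos (hDC1 v'), if_congr (hDC2 v') rfl rfl]
        norm_num
        ring
      rw [Finset.sum_congr rfl (fun v' _ => hpt v'), Finset.sum_add_distrib,
        SUMA' k w hvle u' (X^(2*(k+1))) (u'^(k+1) * Wpoly k),
        SUMB k u' (X^(2*(k+1)) * Wpoly k)]
      rw [hWsucc, hXev, hneg, hsub]
      simp only [if_true, map_one, mul_one, pow_one, map_neg]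
      rw [hX1]
      rw [show k+1 = w + a by omega]
      simp only [map_pow, map_neg, map_one]
      linear_combination ((-1 : Polynomial ℤ)^a * (-1 : Polynomial ℤ)^(w+a+1) * Wpoly k) *
        coreT w a u'


/-- Adin–Gessel–Roichman: `∑_{β ∈ B_n} (-1)^{ℓ_B β} q^{fmaj β} = [2]_{-q}[4]_q ⋯ [2n]_{(-1)^n q}`. -/
theorem stmt6 (n : ℕ) (hn : 0 < n) :
    ∑ β : Bgrp n, (-1 : Polynomial ℤ) ^ lenB β * X ^ fmaj β =
      ∏ i ∈ range n, qpoly (2*(i+1)) ((-1 : Polynomial ℤ) ^ (i+1) * X) := by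
  obtain ⟨m, rfl⟩ : ∃ m, n = m + 1 := ⟨n - 1, by omega⟩
  have h1 : ∀ β : Bgrp (m+1), (-1 : Polynomial ℤ)^(lenB β) * X^(fmaj β) = Fpoly β := by
    intro β
    rw [neg_one_pow_lenB_poly, Fpoly]
  rw [Finset.sum_congr rfl (fun β _ => h1 β), sum_Emap Fpoly, Finset.sum_comm]
  have h2 : ∀ v : Fin (m+1), (∑ β' : Bgrp m, ∑ b : Bool, Fpoly (Emap β' v b)) =
      ∑ b : Bool, psi m v b := by
    intro v
    rw [Finset.sum_comm]
    apply Finset.sum_congr rfl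
    intro b _
    rfl
  rw [Finset.sum_congr rfl (fun v _ => h2 v)]
  have h4 : ∀ v : Fin (m+1), (∑ b : Bool, psi m v b) =
      ((-1 : Polynomial ℤ)^(m+1)*X)^(m-(v:ℕ)) *
        ((((-1 : Polynomial ℤ)^(m+1)*X)^(m+1)) * Wpoly m + Wpoly m) := by
    intro v
    rw [Fintype.sum_bool, psi_eq m v true, psi_eq m v false]
    norm_num [pow_add]
    ring
  rw [Finset.sum_congr rfl (fun v _ => h4 v),
    SUMB m ((-1 : Polynomial ℤ)^(m+1)*X)
      ((((-1 : Polynomial ℤ)^(m+1)*X)^(m+1)) * Wpoly m + Wpoly m)]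
  have h6 : (∏ i ∈ range (m+1), qpoly (2*(i+1)) ((-1 : Polynomial ℤ)^(i+1) * X)) =
      Wpoly m * qpoly (2*(m+1)) ((-1 : Polynomial ℤ)^(m+1) * X) := by
    rw [Finset.prod_range_succ]
    rfl
  rw [h6, show 2*(m+1) = (m+1)+(m+1) by ring,
    qpoly_add (m+1) (m+1) ((-1 : Polynomial ℤ)^(m+1) * X)]
  ring
end

section
/- For every n ∈ ℙ, ∑_{β ∈ B_n} (-1)^{N_1(β)} q^{fmaj(β)} = [2]_{-q} [4]_{-q} ⋯ [2n]_{-q}. -/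
open Finset Polynomial

/-!
Every signed permutation of `n + 1` arises exactly once by inserting the letter `±(n + 1)` into
the window of a signed permutation of `n`, at one of its `n + 1` slots. Writing
`(-1)^N₁ q^fmaj = (-q)^N₁ (q²)^maj`, the sign of the new letter contributes the factor `1 - q`.
Inserting a letter that is `≺`-comparable with every letter of a word of length `n` at its
`n + 1` slots raises `maj` by `0, 1, …, n` in some order, so the positions contribute
`[n + 1]_{q²}`; since `-(n + 1)` lies strictly between the negative and the positive letters,
this is needed for an arbitrary letter, not only for an extremal one. Finally
`(1 - q) [n + 1]_{q²} = [2n + 2]_{-q}`.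
-/

theorem List.insertIdx_append_of_le_length {α : Type*} {w : List α} {j : ℕ} (hj : j ≤ w.length)
    (x : α) (u : List α) : (w ++ u).insertIdx j x = w.insertIdx j x ++ u := by
  induction w generalizing j with
  | nil => simp_all
  | cons c w ih =>
    cases j with
    | zero => simp
    | succ j => simp [ih (Nat.le_of_succ_le_succ hj)]

theorem List.ofFn_insertNth {α : Type*} {n : ℕ} (j : Fin (n + 1)) (x : α) (f : Fin n → α) :
    List.ofFn (Fin.insertNth j x f) = (List.ofFn f).insertIdx j x := by
  refine List.ext_getElem (by simp [List.length_insertIdx_of_le_length, Nat.lt_succ_iff.1 j.2])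
    fun i _ _ => ?_
  rw [List.getElem_insertIdx]
  simp only [List.getElem_ofFn]
  split_ifs with hlt heq
  · rw [Fin.insertNth_apply_below (α := fun _ => α) (i := j) (j := ⟨i, _⟩) hlt, eq_rec_constant]
    rfl
  · simp [show (⟨i, _⟩ : Fin (n + 1)) = j from Fin.ext heq]
  · rw [Fin.insertNth_apply_above (α := fun _ => α) (i := j) (j := ⟨i, _⟩)
      (by simp [Fin.lt_def]; omega), eq_rec_constant]
    rfl

theorem geom_sum_two_mul {R : Type*} [CommSemiring R] (x : R) (m : ℕ) :
    ∑ k ∈ range (2 * m), x ^ k = (1 + x) * ∑ k ∈ range m, (x ^ 2) ^ k := by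
  induction m with
  | zero => simp
  | succ m ih =>
    rw [show 2 * (m + 1) = 2 * m + 1 + 1 by ring, sum_range_succ, sum_range_succ, ih,
      sum_range_succ]
    ring

namespace List

variable {α : Type*} [Inhabited α]

def majBy (r : α → α → Prop) [DecidableRel r] (l : List α) : ℕ :=
  ∑ i ∈ Finset.range (l.length - 1), if r (l.getI (i + 1)) (l.getI i) then i + 1 else 0

variable {r : α → α → Prop} [DecidableRel r]

theorem majBy_append_singleton (v : List α) (b : α) :
    majBy r (v ++ [b]) = majBy r v + if r b (v.getI (v.length - 1)) then v.length else 0 := by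
  rcases v.length.eq_zero_or_pos with hv | hv
  · simp [majBy, hv]
  rw [majBy, majBy, length_append, length_singleton, Nat.add_sub_cancel,
    ← Nat.sub_add_cancel hv, Finset.sum_range_succ, Nat.sub_add_cancel hv,
    getI_append_right _ _ _ le_rfl, Nat.sub_self, getI_cons_zero, getI_append _ _ _ (by omega)]
  congr 1
  refine Finset.sum_congr rfl fun i hi => ?_
  rw [Finset.mem_range] at hi
  rw [getI_append _ _ _ (by omega), getI_append _ _ _ (by omega)]

theorem majBy_append_pair (v : List α) (b c : α) :
    majBy r (v ++ [b, c]) = majBy r v + (if r b (v.getI (v.length - 1)) then v.length else 0) +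
      if r c b then v.length + 1 else 0 := by
  rw [← singleton_append, ← append_assoc, majBy_append_singleton, majBy_append_singleton,
    length_append, length_singleton, Nat.add_sub_cancel, getI_append_right _ _ _ le_rfl,
    Nat.sub_self, getI_cons_zero]

theorem majBy_insertIdx_append_singleton {w : List α} {j : ℕ} (hj : j < w.length) (x a : α) :
    majBy r ((w ++ [a]).insertIdx j x) =
      majBy r (w.insertIdx j x) + if r a (w.getI (w.length - 1)) then w.length + 1 else 0 := by
  rw [insertIdx_append_of_le_length hj.le, majBy_append_singleton,
    length_insertIdx_of_le_length hj.le, Nat.add_sub_cancel,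
    getI_eq_getElem _ (by rw [length_insertIdx_of_le_length hj.le]; omega),
    getI_eq_getElem _ (by omega), getElem_insertIdx_of_gt (by omega)]

variable [IsTrans α r] {R : Type*} [CommRing R] (q : R)

theorem sum_pow_majBy_insertIdx_append_singleton {w : List α} (hw : w ≠ []) {x a : α}
    (hx : ∀ b ∈ w ++ [a], r b x ↔ ¬ r x b)
    (ih : ∑ j ∈ Finset.range (w.length + 1), q ^ majBy r (w.insertIdx j x) =
      q ^ majBy r w * ∑ k ∈ Finset.range (w.length + 1), q ^ k) :
    ∑ j ∈ Finset.range ((w ++ [a]).length + 1), q ^ majBy r ((w ++ [a]).insertIdx j x) =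
      q ^ majBy r (w ++ [a]) * ∑ k ∈ Finset.range ((w ++ [a]).length + 1), q ^ k := by
  have hℓx : r (w.getI (w.length - 1)) x ↔ ¬ r x (w.getI (w.length - 1)) := by
    refine hx _ (mem_append_left _ ?_)
    rw [getI_eq_getElem w (Nat.sub_lt (length_pos_iff.2 hw) one_pos)]
    exact getElem_mem _
  have hT : r x a ↔ ¬ r a x := by rw [hx a (by simp), not_not]
  -- Inserting inside `w` leaves `a` after the last letter of `w`, so only the descent at `a`
  -- moves; the two remaining slots give `w ++ [x, a]` and `w ++ [a, x]`.
  have h_inner : ∀ j ∈ Finset.range w.length, q ^ majBy r ((w ++ [a]).insertIdx j x) =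
      q ^ (if r a (w.getI (w.length - 1)) then w.length + 1 else 0) *
        q ^ majBy r (w.insertIdx j x) := fun j hj => by
    rw [majBy_insertIdx_append_singleton (Finset.mem_range.1 hj), pow_add, mul_comm]
  have h_xa : (w ++ [a]).insertIdx w.length x = w ++ [x, a] := by
    rw [insertIdx_append_of_le_length le_rfl, insertIdx_length_self, append_assoc]; rfl
  have h_ax : (w ++ [a]).insertIdx (w.length + 1) x = w ++ [a, x] := by
    rw [show w.length + 1 = (w ++ [a]).length by simp, insertIdx_length_self, append_assoc]; rfl
  rw [Finset.sum_range_succ, insertIdx_length_self, majBy_append_singleton] at ih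
  rw [length_append, length_singleton, Finset.sum_range_succ, Finset.sum_range_succ,
    Finset.sum_congr rfl h_inner, ← Finset.mul_sum, eq_sub_of_add_eq ih, h_xa, h_ax,
    majBy_append_pair, majBy_append_pair, majBy_append_singleton,
    Finset.sum_range_succ (q ^ ·) (w.length + 1)]
  set L := w.length
  set ℓ := w.getI (L - 1)
  set G := ∑ k ∈ Finset.range (L + 1), q ^ k
  have hG : q * G + 1 = G + q ^ (L + 1) := geom_sum_succ.symm.trans (Finset.sum_range_succ _ _)
  have h_ax_of_not : r a ℓ → ¬ r x ℓ → r a x := fun h h' => _root_.trans h (hℓx.2 h')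
  have h_al_of_xl : r a x → r x ℓ → r a ℓ := fun h h' => _root_.trans h h'
  simp only [pow_add, hT]
  by_cases hP : r a ℓ
  · by_cases hQ : r x ℓ <;> by_cases hS : r a x <;>
      simp only [hP, hQ, hS, if_true, if_false, not_true, not_false_eq_true, true_implies,
        implies_true] at h_ax_of_not ⊢ <;>
      linear_combination q ^ majBy r w * q ^ L * hG
  · by_cases hQ : r x ℓ <;> by_cases hS : r a x <;>
      simp only [hP, hQ, hS, if_true, if_false, not_true, not_false_eq_true, true_implies]
        at h_al_of_xl ⊢ <;>
      linear_combination

theorem sum_pow_majBy_insertIdx (x : α) (w : List α) (hx : ∀ a ∈ w, r a x ↔ ¬ r x a) :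
    ∑ j ∈ Finset.range (w.length + 1), q ^ majBy r (w.insertIdx j x) =
      q ^ majBy r w * ∑ k ∈ Finset.range (w.length + 1), q ^ k := by
  induction w using List.reverseRecOn with
  | nil => simp [majBy]
  | append_singleton w a ih =>
    rcases eq_or_ne w [] with rfl | hw
    · have hT : r x a ↔ ¬ r a x := by rw [hx a (by simp), not_not]
      by_cases h : r a x <;> simp [majBy, Finset.sum_range_succ, hT, h, add_comm]
    exact sum_pow_majBy_insertIdx_append_singleton q hw hx
      (ih fun b hb => hx b (mem_append_left _ hb))

end List

instance : IsTrans ℤ precLt := ⟨fun _ _ _ hab hbc => by unfold precLt at *; omega⟩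

section SignedPermutation

variable {n : ℕ}

def window (β : Bgrp n) : List ℤ := List.ofFn (wdw β)

@[simp] theorem length_window (β : Bgrp n) : (window β).length = n := List.length_ofFn

theorem getI_window (β : Bgrp n) (i : ℕ) : (window β).getI i = wdwN β i := by
  by_cases h : i < n
  · rw [List.getI_eq_getElem _ (by simpa)]
    simp [window, wdwN, h]
  · rw [List.getI_eq_default _ (by simpa using h), wdwN, dif_neg h]; rfl

theorem majB_eq_majBy_window (β : Bgrp n) : majB β = (window β).majBy precLt := by
  simp only [majB, DesB, sum_filter, List.majBy, length_window, getI_window]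

theorem neg_one_pow_N1_mul_pow_fmaj {R : Type*} [CommRing R] (q : R) (β : Bgrp n) :
    (-1) ^ N1 β * q ^ fmaj β = (-q) ^ N1 β * (q ^ 2) ^ majB β := by
  rw [fmaj, neg_pow, pow_add, pow_mul]; ring

def signedTop (n : ℕ) (s : Bool) : ℤ := (if s then -1 else 1) * (n + 1)

def insertTopPerm (j : Fin (n + 1)) (σ : Equiv.Perm (Fin n)) : Equiv.Perm (Fin (n + 1)) :=
  (finSuccEquiv' j).trans ((Equiv.optionCongr σ).trans (finSuccEquiv' (Fin.last n)).symm)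

@[simp] theorem insertTopPerm_apply_same (j : Fin (n + 1)) (σ : Equiv.Perm (Fin n)) :
    insertTopPerm j σ j = Fin.last n := by
  simp [insertTopPerm]

@[simp] theorem insertTopPerm_apply_succAbove (j : Fin (n + 1)) (σ : Equiv.Perm (Fin n))
    (k : Fin n) : insertTopPerm j σ (j.succAbove k) = (σ k).castSucc := by
  simp [insertTopPerm]

def insertTop (β : Bgrp n) (j : Fin (n + 1)) (s : Bool) : Bgrp (n + 1) :=
  (insertTopPerm j β.1, Fin.insertNth j s β.2)

theorem wdw_insertTop (β : Bgrp n) (j : Fin (n + 1)) (s : Bool) :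
    wdw (insertTop β j s) = Fin.insertNth j (signedTop n s) (wdw β) := by
  funext i
  induction i using j.succAboveCases with
  | x => simp [wdw, insertTop, signedTop]
  | p k => simp [wdw, insertTop]

theorem window_insertTop (β : Bgrp n) (j : Fin (n + 1)) (s : Bool) :
    window (insertTop β j s) = (window β).insertIdx j (signedTop n s) := by
  rw [window, wdw_insertTop, List.ofFn_insertNth, window]

theorem N1_insertTop (β : Bgrp n) (j : Fin (n + 1)) (s : Bool) :
    N1 (insertTop β j s) = N1 β + s.toNat := by
  rw [N1, NegB, card_filter, Fin.sum_univ_succAbove _ j, wdw_insertTop, N1, NegB, card_filter]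
  cases s <;> simp [signedTop, add_comm] <;> omega

theorem insertTop_injective :
    Function.Injective fun p : Bgrp n × Fin (n + 1) × Bool => insertTop p.1 p.2.1 p.2.2 := by
  rintro ⟨⟨σ, ε⟩, j, s⟩ ⟨⟨σ', ε'⟩, j', s'⟩ h
  simp only [insertTop, Prod.mk.injEq] at h
  obtain ⟨hσ, hε⟩ := h
  obtain rfl : j = j' := (insertTopPerm j σ).injective <| by
    rw [insertTopPerm_apply_same, hσ, insertTopPerm_apply_same]
  obtain ⟨rfl, rfl⟩ := Fin.insertNth_injective2 hε
  obtain rfl : σ = σ' := Equiv.ext fun k => Fin.castSucc_injective _ <| by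
    rw [← insertTopPerm_apply_succAbove, hσ, insertTopPerm_apply_succAbove]
  rfl

theorem card_Bgrp (n : ℕ) : Fintype.card (Bgrp n) = n.factorial * 2 ^ n := by
  rw [Fintype.card_prod, Fintype.card_perm, Fintype.card_fun, Fintype.card_fin,
    Fintype.card_bool]

theorem insertTop_bijective :
    Function.Bijective fun p : Bgrp n × Fin (n + 1) × Bool => insertTop p.1 p.2.1 p.2.2 := by
  refine (Fintype.bijective_iff_injective_and_card _).2 ⟨insertTop_injective, ?_⟩
  rw [Fintype.card_prod (Bgrp n), Fintype.card_prod (Fin _), card_Bgrp, card_Bgrp,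
    Fintype.card_fin, Fintype.card_bool, Nat.factorial_succ]
  ring

theorem mem_window {β : Bgrp n} {a : ℤ} (ha : a ∈ window β) : a ≠ 0 ∧ a.natAbs ≤ n := by
  obtain ⟨i, rfl⟩ := List.mem_ofFn.1 ha
  have := (β.1 i).isLt
  unfold wdw
  split_ifs <;> omega

theorem precLt_signedTop_iff {β : Bgrp n} (s : Bool) {a : ℤ} (ha : a ∈ window β) :
    precLt a (signedTop n s) ↔ ¬ precLt (signedTop n s) a := by
  have := mem_window ha
  unfold precLt signedTop
  split_ifs <;> omega

end SignedPermutation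

theorem sum_insertTop {R : Type*} [CommRing R] (q : R) {n : ℕ} (β : Bgrp n) :
    ∑ j : Fin (n + 1), ∑ s : Bool,
        (-q) ^ N1 (insertTop β j s) * (q ^ 2) ^ majB (insertTop β j s) =
      (-q) ^ N1 β * (q ^ 2) ^ majB β * ∑ k ∈ range (2 * (n + 1)), (-q) ^ k := by
  have hmaj : ∀ s, ∑ j : Fin (n + 1), (q ^ 2) ^ majB (insertTop β j s) =
      (q ^ 2) ^ majB β * ∑ k ∈ range (n + 1), (q ^ 2) ^ k := fun s => by
    have h := List.sum_pow_majBy_insertIdx (q ^ 2) (signedTop n s) (window β)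
      fun a ha => precLt_signedTop_iff s ha
    rw [length_window, ← Fin.sum_univ_eq_sum_range
      (fun j => (q ^ 2) ^ ((window β).insertIdx j (signedTop n s)).majBy precLt)] at h
    simpa only [majB_eq_majBy_window, window_insertTop] using h
  rw [sum_comm, geom_sum_two_mul, neg_sq]
  simp only [N1_insertTop, pow_add, mul_assoc, ← mul_sum, hmaj, Fintype.sum_bool,
    Bool.toNat_true, Bool.toNat_false, pow_one, pow_zero, one_mul]
  ring

theorem sum_neg_one_pow_N1_mul_pow_fmaj {R : Type*} [CommRing R] (q : R) (n : ℕ) :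
    ∑ β : Bgrp n, (-1) ^ N1 β * q ^ fmaj β =
      ∏ i ∈ range n, ∑ k ∈ range (2 * (i + 1)), (-q) ^ k := by
  simp only [neg_one_pow_N1_mul_pow_fmaj]
  induction n with
  | zero => simp [N1, NegB, majB, DesB]
  | succ n ih =>
    rw [prod_range_succ, ← ih, sum_mul, ← insertTop_bijective.sum_comp, Fintype.sum_prod_type]
    refine sum_congr rfl fun β _ => ?_
    rw [Fintype.sum_prod_type, sum_insertTop]

theorem stmt7_general (n : ℕ) :
    ∑ β : Bgrp n, (-1 : Polynomial ℤ) ^ N1 β * X ^ fmaj β =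
      ∏ i ∈ range n, qpoly (2*(i+1)) (-X) :=
  sum_neg_one_pow_N1_mul_pow_fmaj X n

/-- `∑_{β ∈ B_n} (-1)^{N₁ β} q^{fmaj β} = [2]_{-q}[4]_{-q} ⋯ [2n]_{-q}`. -/
theorem stmt7 (n : ℕ) (hn : 0 < n) :
    ∑ β : Bgrp n, (-1 : Polynomial ℤ) ^ N1 β * X ^ fmaj β =
      ∏ i ∈ range n, qpoly (2*(i+1)) (-X) :=
  stmt7_general n
end

section
/- For every n ∈ ℙ, ∑_{β ∈ B_{2n}, fmaj(β) odd} (-1)^{ℓ_B(β)} q^{fmaj(β)} = 0; that is, the odd-degree part of the signed Mahonian polynomial of B_{2n} vanishes. -/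
open Finset Polynomial

/-!
The sign `(-1) ^ lenB β` is the linear character `sgn β = sign |β| · (-1) ^ N1 β`: both are
multiplicative along words in the Coxeter generators, agree on the generators, and every element
of `B m` is such a word.

If `fmaj β = 2 maj β + N1 β` is odd then `N1 β` is odd, so in `B (2n)` some pair of absolute
values `{2k+1, 2k+2}` carries two different signs. Exchanging these two absolute values, for the
least such `k`, changes neither the descent set (two entries of different signs are compared by
sign alone, and every other entry compares the same way with either of them) nor `N1`, hence
not `fmaj`, while it flips `sgn`. This sign-reversing involution cancels the sum.
-/

namespace Bgrp

open Equiv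

variable {m : ℕ}

theorem bmul_assoc (a b c : Bgrp m) : bmul (bmul a b) c = bmul a (bmul b c) := by
  refine Prod.ext (mul_assoc _ _ _) (funext fun i => ?_)
  simp [bmul]

theorem bone_bmul (a : Bgrp m) : bmul (bone m) a = a := by
  simp [bmul, bone]

theorem bmul_bone (a : Bgrp m) : bmul a (bone m) = a := by
  simp [bmul, bone]

def ofPerm (σ : Perm (Fin m)) : Bgrp m := (σ, fun _ => false)

theorem ofPerm_bmul_ofPerm (σ τ : Perm (Fin m)) :
    bmul (ofPerm σ) (ofPerm τ) = ofPerm (σ * τ) := by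
  simp [bmul, ofPerm]

def sgn (β : Bgrp m) : ℤ :=
  (Perm.sign β.1 : ℤ) * ∏ i, if β.2 i then -1 else 1

theorem sgn_bmul (β γ : Bgrp m) : sgn (bmul β γ) = sgn β * sgn γ := by
  have hsigns : (∏ i, if (bmul β γ).2 i then (-1 : ℤ) else 1) =
      (∏ i, if γ.2 i then (-1 : ℤ) else 1) * ∏ i, if β.2 i then (-1 : ℤ) else 1 := by
    rw [← Equiv.prod_comp γ.1 (fun j => if β.2 j then (-1 : ℤ) else 1), ← prod_mul_distrib]
    exact prod_congr rfl fun i _ => by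
      cases h₁ : γ.2 i <;> cases h₂ : β.2 (γ.1 i) <;> simp [bmul, h₁, h₂]
  rw [sgn, hsigns, show (bmul β γ).1 = β.1 * γ.1 from rfl, map_mul, Units.val_mul, sgn, sgn]
  ring

theorem sgn_bone : sgn (bone m) = 1 := by
  simp [sgn, bone]

theorem sgn_of_mem_BGens {g : Bgrp m} (hg : g ∈ BGens m) : sgn g = -1 := by
  rcases hg with ⟨h0, rfl⟩ | ⟨i, h, rfl⟩
  · simp [sgn, prod_ite_eq']
  · have hne : (⟨i, Nat.lt_of_succ_lt h⟩ : Fin m) ≠ ⟨i + 1, h⟩ := by simp [Fin.ext_iff]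
    simp [sgn, Perm.sign_swap hne]

theorem sgn_foldr_bmul {l : List (Bgrp m)} (hl : ∀ g ∈ l, g ∈ BGens m) :
    sgn (l.foldr bmul (bone m)) = (-1) ^ l.length := by
  induction l with
  | nil => exact sgn_bone
  | cons g l ih =>
    rw [List.foldr_cons, sgn_bmul, sgn_of_mem_BGens (hl g List.mem_cons_self),
      ih fun x hx => hl x (List.mem_cons_of_mem g hx), List.length_cons, pow_succ']

def IsWord (β : Bgrp m) : Prop :=
  ∃ l : List (Bgrp m), (∀ g ∈ l, g ∈ BGens m) ∧ l.foldr bmul (bone m) = β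

theorem foldr_bmul_eq_bmul (l : List (Bgrp m)) (x : Bgrp m) :
    l.foldr bmul x = bmul (l.foldr bmul (bone m)) x := by
  induction l with
  | nil => rw [List.foldr_nil, List.foldr_nil, bone_bmul]
  | cons g l ih => rw [List.foldr_cons, List.foldr_cons, ih, bmul_assoc]

theorem IsWord.bmul {β γ : Bgrp m} (hβ : IsWord β) (hγ : IsWord γ) : IsWord (bmul β γ) := by
  obtain ⟨l₁, hl₁, rfl⟩ := hβ
  obtain ⟨l₂, hl₂, rfl⟩ := hγ
  refine ⟨l₁ ++ l₂, fun g hg => ?_, ?_⟩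
  · rcases List.mem_append.1 hg with h | h
    exacts [hl₁ g h, hl₂ g h]
  · rw [List.foldr_append, foldr_bmul_eq_bmul l₁]

theorem IsWord.of_mem_BGens {g : Bgrp m} (hg : g ∈ BGens m) : IsWord g :=
  ⟨[g], by simpa using hg, bmul_bone g⟩

theorem isWord_bone : IsWord (bone m) := ⟨[], by simp, rfl⟩

theorem isWord_ofPerm (σ : Perm (Fin m)) : IsWord (ofPerm σ) := by
  let words : Submonoid (Perm (Fin m)) :=
    { carrier := {σ | IsWord (ofPerm σ)}
      mul_mem' := fun {σ τ} hσ hτ => by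
        show IsWord (ofPerm (σ * τ))
        exact ofPerm_bmul_ofPerm σ τ ▸ hσ.bmul hτ
      one_mem' := isWord_bone }
  suffices words = ⊤ from (Submonoid.eq_top_iff' words).1 this σ
  cases m with
  | zero => exact Subsingleton.elim _ _
  | succ k =>
    refine top_unique ((Perm.mclosure_swap_castSucc_succ k).symm.le.trans ?_)
    rw [Submonoid.closure_le]
    rintro _ ⟨i, rfl⟩
    exact IsWord.of_mem_BGens (Or.inr ⟨i, by simp, rfl⟩)

theorem isWord_flip (j : Fin m) : IsWord ((1, fun i => decide (i = j)) : Bgrp m) := by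
  set z : Fin m := ⟨0, j.pos⟩
  have hz : IsWord ((1, fun i => decide (i = z)) : Bgrp m) :=
    IsWord.of_mem_BGens (Or.inl ⟨j.pos, rfl⟩)
  have hconj : bmul (bmul (ofPerm (swap z j)) (1, fun i => decide (i = z))) (ofPerm (swap z j)) =
      (1, fun i => decide (i = j)) := by
    refine Prod.ext (by simp [bmul, ofPerm]) (funext fun i => ?_)
    simp [bmul, ofPerm, swap_apply_eq_iff]
  exact hconj ▸ ((isWord_ofPerm _).bmul hz).bmul (isWord_ofPerm _)

theorem isWord_flips (s : Finset (Fin m)) : IsWord ((1, fun i => decide (i ∈ s)) : Bgrp m) := by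
  induction s using Finset.induction_on with
  | empty => simpa [bone] using isWord_bone
  | insert a s ha ih =>
    have hins : bmul (1, fun i => decide (i = a)) ((1, fun i => decide (i ∈ s)) : Bgrp m) =
        (1, fun i => decide (i ∈ insert a s)) := by
      refine Prod.ext (by simp [bmul]) (funext fun i => ?_)
      by_cases hi : i = a
      · simp [bmul, hi, ha]
      · simp [bmul, hi]
    exact hins ▸ (isWord_flip a).bmul ih

theorem isWord (β : Bgrp m) : IsWord β := by
  have hβ : bmul (ofPerm β.1) (1, fun i => decide (i ∈ univ.filter (β.2 · = true))) = β := by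
    refine Prod.ext (by simp [bmul, ofPerm]) (funext fun i => ?_)
    simp [bmul, ofPerm]
  exact hβ ▸ (isWord_ofPerm _).bmul (isWord_flips _)

theorem neg_one_pow_lenB (β : Bgrp m) : (-1 : ℤ) ^ lenB β = sgn β := by
  obtain ⟨l, hl, hlβ⟩ := isWord β
  obtain ⟨l', hlen, hl', hl'β⟩ := Nat.sInf_mem
    (s := {k | ∃ l : List (Bgrp m), l.length = k ∧ (∀ g ∈ l, g ∈ BGens m) ∧
      l.foldr bmul (bone m) = β}) ⟨l.length, l, rfl, hl, hlβ⟩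
  rw [lenB, ← hlen, ← sgn_foldr_bmul hl', hl'β]

theorem N1_eq_card (β : Bgrp m) : N1 β = (univ.filter (β.2 · = true)).card := by
  refine congrArg card (filter_congr fun i _ => ?_)
  have : (0 : ℤ) ≤ β.1 i := Int.natCast_nonneg _
  cases h : β.2 i <;> simp [wdw, h] <;> omega

def valSign (β : Bgrp m) (v : Fin m) : Bool := β.2 (β.1.symm v)

theorem neg_one_pow_N1 (β : Bgrp m) :
    (-1 : ℤ) ^ N1 β = ∏ v, if valSign β v then -1 else 1 := by
  unfold valSign
  rw [Equiv.prod_comp β.1.symm (fun i => if β.2 i then (-1 : ℤ) else 1), prod_ite,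
    prod_const, prod_const, one_pow, mul_one, N1_eq_card]

theorem precLt_signed_iff (s t : Bool) (x y : Fin m) :
    precLt ((if t then -1 else 1) * ((y : ℤ) + 1)) ((if s then -1 else 1) * ((x : ℤ) + 1)) ↔
      (t = true ∧ s = false) ∨ (t = s ∧ y < x) := by
  cases s <;> cases t <;> simp [precLt] <;> omega

theorem swap_lt_swap_iff {a b u v : Fin m} (hab : (a : ℕ) + 1 = b) (h₁ : ¬(u = a ∧ v = b))
    (h₂ : ¬(u = b ∧ v = a)) : swap a b v < swap a b u ↔ v < u := by
  rw [Fin.lt_def, Fin.lt_def, swap_apply_def, swap_apply_def]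
  split_ifs <;> simp only [Fin.ext_iff] at * <;> omega

def swapVals (β : Bgrp m) (a b : Fin m) : Bgrp m := (swap a b * β.1, β.2)

/-- Entries of different signs are compared by sign alone, and exchanging the adjacent values
`a`, `b` keeps the order of two entries of equal sign unless they are `a` and `b` themselves. -/
theorem DesB_swapVals (β : Bgrp m) {a b : Fin m} (hab : (a : ℕ) + 1 = b)
    (hmix : valSign β a ≠ valSign β b) : DesB (swapVals β a b) = DesB β := by
  refine filter_congr fun i hi => ?_
  have hi₁ : i < m := by rw [mem_range] at hi; omega
  have hi₂ : i + 1 < m := by rw [mem_range] at hi; omega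
  simp only [wdwN, dif_pos hi₁, dif_pos hi₂]
  dsimp only [wdw, swapVals, Perm.mul_apply]
  rw [precLt_signed_iff, precLt_signed_iff]
  by_cases hts : β.2 ⟨i + 1, hi₂⟩ = β.2 ⟨i, hi₁⟩
  · have hsame : ∀ {x y}, β.1 ⟨i, hi₁⟩ = x → β.1 ⟨i + 1, hi₂⟩ = y →
        valSign β x = valSign β y := by
      rintro _ _ rfl rfl
      simp [valSign, hts]
    rw [swap_lt_swap_iff hab (fun h => hmix (hsame h.1 h.2))
      (fun h => hmix (hsame h.1 h.2).symm)]
  · simp only [hts, false_and, or_false]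

theorem N1_swapVals (β : Bgrp m) (a b : Fin m) : N1 (swapVals β a b) = N1 β := by
  rw [N1_eq_card, N1_eq_card]
  rfl

theorem fmaj_swapVals (β : Bgrp m) {a b : Fin m} (hab : (a : ℕ) + 1 = b)
    (hmix : valSign β a ≠ valSign β b) : fmaj (swapVals β a b) = fmaj β := by
  rw [fmaj, majB, DesB_swapVals β hab hmix, N1_swapVals, fmaj, majB]

theorem sgn_swapVals (β : Bgrp m) {a b : Fin m} (hab : a ≠ b) :
    sgn (swapVals β a b) = -sgn β := by
  rw [sgn, sgn, swapVals, map_mul, Perm.sign_swap hab]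
  push_cast
  ring

theorem valSign_swapVals (β : Bgrp m) (a b v : Fin m) :
    valSign (swapVals β a b) v = valSign β (swap a b v) := by
  simp [valSign, swapVals, Perm.mul_def, symm_swap]

theorem swapVals_swapVals (β : Bgrp m) (a b : Fin m) : swapVals (swapVals β a b) a b = β :=
  Prod.ext (by simp [swapVals, ← mul_assoc]) rfl

theorem swapVals_ne {a b : Fin m} (hab : a ≠ b) (β : Bgrp m) : swapVals β a b ≠ β := by
  intro h
  have : swap a b * β.1 = β.1 := congrArg Prod.fst h
  exact hab (swap_eq_one_iff.1 (mul_eq_right.1 this))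

variable {n : ℕ}

def pairLo (k : Fin n) : Fin (2 * n) := ⟨2 * k, by omega⟩

def pairHi (k : Fin n) : Fin (2 * n) := ⟨2 * k + 1, by omega⟩

theorem prod_univ_fin_two_mul {M : Type*} [CommMonoid M] (f : Fin (2 * n) → M) :
    ∏ v, f v = ∏ k, f (pairLo k) * f (pairHi k) := by
  rw [← (finProdFinEquiv.trans (finCongr (mul_comm n 2))).prod_comp, Fintype.prod_prod_type]
  refine prod_congr rfl fun k _ => ?_
  rw [Fin.prod_univ_two]
  congr 2
  · ext
    simp [pairLo, mul_comm]
  · ext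
    simp [pairHi, mul_comm, add_comm]

def mixedPairs (β : Bgrp (2 * n)) : Finset (Fin n) :=
  univ.filter fun k => valSign β (pairLo k) ≠ valSign β (pairHi k)

theorem mixedPairs_nonempty (β : Bgrp (2 * n)) (hodd : Odd (N1 β)) :
    (mixedPairs β).Nonempty := by
  by_contra hempty
  rw [not_nonempty_iff_eq_empty, mixedPairs, filter_eq_empty_iff] at hempty
  have heven : (-1 : ℤ) ^ N1 β = 1 := by
    rw [neg_one_pow_N1, prod_univ_fin_two_mul]
    refine prod_eq_one fun k _ => ?_
    rw [not_not.1 (hempty (mem_univ k))]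
    split_ifs <;> norm_num
  rw [hodd.neg_one_pow] at heven
  norm_num at heven

theorem mixedPairs_swapVals (β : Bgrp (2 * n)) (k : Fin n) :
    mixedPairs (swapVals β (pairLo k) (pairHi k)) = mixedPairs β := by
  refine filter_congr fun j _ => ?_
  rw [valSign_swapVals, valSign_swapVals]
  rcases eq_or_ne j k with rfl | hjk
  · rw [swap_apply_left, swap_apply_right]
    exact ne_comm
  · have hjk' : (j : ℕ) ≠ k := Fin.val_ne_of_ne hjk
    rw [swap_apply_of_ne_of_ne, swap_apply_of_ne_of_ne] <;>
      simp only [pairLo, pairHi, ne_eq, Fin.ext_iff] <;> omega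

/-- In window terms: exchange the absolute values `2k+1` and `2k+2`, for the least mixed `k`. -/
def pairSwap (β : Bgrp (2 * n)) (h : (mixedPairs β).Nonempty) : Bgrp (2 * n) :=
  swapVals β (pairLo ((mixedPairs β).min' h)) (pairHi ((mixedPairs β).min' h))

theorem pairLo_ne_pairHi (k : Fin n) : pairLo k ≠ pairHi k := by
  simp [pairLo, pairHi, Fin.ext_iff]

theorem fmaj_pairSwap (β : Bgrp (2 * n)) (h : (mixedPairs β).Nonempty) :
    fmaj (pairSwap β h) = fmaj β :=
  fmaj_swapVals β rfl (mem_filter.1 (min'_mem _ h)).2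

theorem sgn_pairSwap (β : Bgrp (2 * n)) (h : (mixedPairs β).Nonempty) :
    sgn (pairSwap β h) = -sgn β :=
  sgn_swapVals β (pairLo_ne_pairHi _)

theorem pairSwap_ne (β : Bgrp (2 * n)) (h : (mixedPairs β).Nonempty) : pairSwap β h ≠ β :=
  swapVals_ne (pairLo_ne_pairHi _) β

theorem pairSwap_pairSwap (β : Bgrp (2 * n)) (h : (mixedPairs β).Nonempty)
    (h' : (mixedPairs (pairSwap β h)).Nonempty) : pairSwap (pairSwap β h) h' = β := by
  have hmin : (mixedPairs (pairSwap β h)).min' h' = (mixedPairs β).min' h := by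
    simp only [pairSwap, mixedPairs_swapVals]
  rw [pairSwap, hmin]
  exact swapVals_swapVals β _ _

end Bgrp

theorem stmt13_general (n : ℕ) :
    ∑ β ∈ (univ : Finset (Bgrp (2*n))).filter (fun β => fmaj β % 2 = 1),
      (-1 : Polynomial ℤ) ^ lenB β * X ^ fmaj β = 0 := by
  have hmixed : ∀ β ∈ (univ : Finset (Bgrp (2*n))).filter (fun β => fmaj β % 2 = 1),
      (Bgrp.mixedPairs β).Nonempty := fun β hβ => by
    have hodd : fmaj β % 2 = 1 := (mem_filter.1 hβ).2
    exact Bgrp.mixedPairs_nonempty β (Nat.odd_iff.2 (by rw [fmaj] at hodd; omega))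
  have hsign (β : Bgrp (2 * n)) : (-1 : ℤ[X]) ^ lenB β = C (Bgrp.sgn β) := by
    rw [← Bgrp.neg_one_pow_lenB]
    simp
  refine sum_involution (fun β hβ => Bgrp.pairSwap β (hmixed β hβ)) (fun β hβ => ?_)
    (fun β _ _ => Bgrp.pairSwap_ne β _) (fun β hβ => ?_)
    (fun β _ => Bgrp.pairSwap_pairSwap β _ _)
  · rw [hsign, hsign, Bgrp.sgn_pairSwap, Bgrp.fmaj_pairSwap, C_neg]
    ring
  · simpa [Bgrp.fmaj_pairSwap] using hβ

/-- The odd part of the signed Mahonian polynomial of `B_{2n}` vanishes. -/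
theorem stmt13 (n : ℕ) (hn : 0 < n) :
    ∑ β ∈ (univ : Finset (Bgrp (2*n))).filter (fun β => fmaj β % 2 = 1),
      (-1 : Polynomial ℤ) ^ lenB β * X ^ fmaj β = 0 :=
  stmt13_general n
end

section
/- For every γ ∈ Δ_n (i.e., γ ∈ B_n with γ(n) > 0), fmaj(-γ) = fmaj(γ) + n. -/
open Finset Polynomial

lemma wdw_negB {n : ℕ} (β : Bgrp n) (i : Fin n) : wdw (negB β) i = -wdw β i := by
  unfold wdw negB
  cases h : β.2 i <;> simp [h]

lemma wdw_ne_zero {n : ℕ} (β : Bgrp n) (i : Fin n) : wdw β i ≠ 0 := by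
  unfold wdw
  cases β.2 i <;> simp <;> omega

lemma wdwN_negB {n : ℕ} (β : Bgrp n) (i : ℕ) : wdwN (negB β) i = -wdwN β i := by
  unfold wdwN
  split_ifs
  · exact wdw_negB β _
  · simp

lemma wdwN_ne_zero {n : ℕ} (β : Bgrp n) {i : ℕ} (hi : i < n) : wdwN β i ≠ 0 := by
  rw [wdwN, dif_pos hi]
  exact wdw_ne_zero β _

lemma precLt_neg_neg_indicator {a b : ℤ} (ha : a ≠ 0) (hb : b ≠ 0) :
    (if precLt (-b) (-a) then (1 : ℤ) else 0) - (if precLt b a then 1 else 0)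
      = (if a < 0 then 1 else 0) - (if b < 0 then 1 else 0) := by
  unfold precLt
  split_ifs <;> omega

lemma N1_negB_add_N1 {n : ℕ} (β : Bgrp n) : N1 (negB β) + N1 β = n := by
  have hneg : NegB (negB β) = univ.filter (fun i => ¬ wdw β i < 0) := by
    refine filter_congr fun i _ => ?_
    have := wdw_ne_zero β i
    rw [wdw_negB]
    omega
  rw [N1, N1, hneg, NegB, add_comm, card_filter_add_card_filter_not, card_univ,
    Fintype.card_fin]

lemma N1_eq_sum_range {n : ℕ} (β : Bgrp n) :
    (N1 β : ℤ) = ∑ i ∈ range n, if wdwN β i < 0 then 1 else 0 := by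
  rw [N1, NegB, card_filter, Nat.cast_sum, sum_range]
  refine sum_congr rfl fun i _ => ?_
  simp [wdwN]

lemma sum_range_succ_mul_sub_succ {R : Type*} [CommRing R] (s : ℕ → R) (m : ℕ) :
    ∑ i ∈ range m, ((i : R) + 1) * (s i - s (i + 1))
      = ∑ i ∈ range (m + 1), s i - (m + 1) * s m := by
  induction m with
  | zero => simp
  | succ m ih =>
    rw [sum_range_succ, ih, sum_range_succ _ (m + 1)]
    push_cast
    ring

/-- Negation flips the descent status at `i` exactly when `β(i)` and `β(i+1)` have opposite
signs; summing these flips with weight `i + 1` telescopes to the number of negative entries. -/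
lemma majB_negB {n : ℕ} (β : Bgrp n) :
    (majB (negB β) : ℤ)
      = majB β + N1 β - n * (if wdwN β (n - 1) < 0 then 1 else 0) := by
  obtain _ | m := n
  · simp [majB, DesB, N1, NegB]
  set s : ℕ → ℤ := fun i => if wdwN β i < 0 then 1 else 0 with hs
  have hdescent : ∀ i ∈ range m,
      ((if precLt (wdwN (negB β) (i + 1)) (wdwN (negB β) i) then ((i : ℤ) + 1) else 0)
        - if precLt (wdwN β (i + 1)) (wdwN β i) then ((i : ℤ) + 1) else 0)
      = ((i : ℤ) + 1) * (s i - s (i + 1)) := by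
    intro i hi
    rw [mem_range] at hi
    rw [wdwN_negB, wdwN_negB, hs, ← precLt_neg_neg_indicator (wdwN_ne_zero β (by omega))
      (wdwN_ne_zero β (by omega))]
    split_ifs <;> ring
  have hmaj : (majB (negB β) : ℤ) - majB β = ∑ i ∈ range (m + 1), s i - (m + 1) * s m := by
    simp only [majB, DesB, Nat.add_sub_cancel, sum_filter, Nat.cast_sum, Nat.cast_ite,
      Nat.cast_add, Nat.cast_one, Nat.cast_zero, ← sum_sub_distrib]
    rw [sum_congr rfl hdescent, sum_range_succ_mul_sub_succ]
  rw [N1_eq_sum_range, Nat.add_sub_cancel]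
  push_cast
  linarith

/-- For `γ ∈ Δ_n`, `fmaj(-γ) = fmaj(γ) + n`. -/
theorem stmt16 (n : ℕ) (γ : Bgrp n) (hγ : γ ∈ DeltaSet n) :
    fmaj (negB γ) = fmaj γ + n := by
  have hlast : ¬ wdwN γ (n - 1) < 0 := by
    simp only [DeltaSet, mem_filter, mem_univ, true_and] at hγ
    omega
  have hmaj := majB_negB γ
  have hN1 := N1_negB_add_N1 γ
  rw [if_neg hlast, mul_zero, sub_zero] at hmaj
  unfold fmaj
  omega
end
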